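/- arXiv:1709.05156 — 5 statements merged into one kernel-verified Lean document; each statement's English description precedes it below -/
import Mathlib

section
/- Let x_1, …, x_N be a finite population of N real numbers, each contained in the interval [0,1], with population mean μ = (1/N)∑_{i=1}^N x_i. Let X_1, …, X_n (with 1 ≤ n ≤ N) denote a uniformly random sample drawn without replacement from this population. Then for every ε > 0, the probability that (1/n)∑_{i=1}^n X_i − μ ≥ ε is at most exp(−2 n ε²). -/
open scoped Classical

section Aux
open Finset
set_option linter.unusedSectionVars false
variable {ι : Type*} [DecidableEq ι] (a : ι → ℝ)

noncomputable def E (s : Finset ι) (k : ℕ) : ℝ := ∑ T ∈ s.powersetCard k, ∏ i ∈ T, a i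

lemma E_nonneg (ha : ∀ i, 0 ≤ a i) (s : Finset ι) (k : ℕ) : 0 ≤ E a s k :=
  Finset.sum_nonneg fun _ _ => Finset.prod_nonneg fun i _ => ha i

lemma E_zero (s : Finset ι) : E a s 0 = 1 := by simp [E]

lemma E_insert {t : Finset ι} {i : ι} (hi : i ∉ t) (k : ℕ) :
    E a (insert i t) (k+1) = E a t (k+1) + a i * E a t k := by
  rw [E, Finset.powersetCard_succ_insert hi, Finset.sum_union]
  · congr 1
    rw [Finset.sum_image, E, Finset.mul_sum]
    · refine Finset.sum_congr rfl fun T hT => ?_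
      exact Finset.prod_insert fun h => hi ((Finset.mem_powersetCard.mp hT).1 h)
    · intro T hT U hU h
      have hiT : i ∉ T := fun h' => hi ((Finset.mem_powersetCard.mp hT).1 h')
      have hiU : i ∉ U := fun h' => hi ((Finset.mem_powersetCard.mp hU).1 h')
      have := congrArg (Finset.erase · i) h
      simpa [Finset.erase_insert hiT, Finset.erase_insert hiU] using this
  · rw [Finset.disjoint_right]
    rintro T hT hmem
    simp only [Finset.mem_image] at hT
    obtain ⟨U, hU, rfl⟩ := hT
    exact hi ((Finset.mem_powersetCard.mp hmem).1 (Finset.mem_insert_self _ _))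

lemma E_split {s : Finset ι} {i : ι} (hi : i ∈ s) (k : ℕ) :
    E a s (k+1) = E a (s.erase i) (k+1) + a i * E a (s.erase i) k := by
  conv_lhs => rw [← Finset.insert_erase hi]
  exact E_insert a (Finset.notMem_erase _ _) k

lemma ident1 (s : Finset ι) (k : ℕ) :
    ∑ i ∈ s, a i * E a (s.erase i) k = (k+1 : ℝ) * E a s (k+1) := by
  have lhs : ∑ i ∈ s, a i * E a (s.erase i) k
      = ∑ p ∈ s.sigma (fun i => (s.erase i).powersetCard k), a p.1 * ∏ j ∈ p.2, a j := by
    rw [Finset.sum_sigma]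
    simp [E, Finset.mul_sum]
  have rhs : (k+1 : ℝ) * E a s (k+1)
      = ∑ p ∈ (s.powersetCard (k+1)).sigma (fun T => T), a p.2 * ∏ j ∈ p.1.erase p.2, a j := by
    rw [Finset.sum_sigma, E, Finset.mul_sum]
    refine Finset.sum_congr rfl fun T hT => ?_
    have hcard : T.card = k + 1 := (Finset.mem_powersetCard.mp hT).2
    have : ∀ i ∈ T, a i * ∏ j ∈ T.erase i, a j = ∏ j ∈ T, a j := fun i hi =>
      Finset.mul_prod_erase T a hi
    rw [Finset.sum_congr rfl this, Finset.sum_const, hcard]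
    push_cast
    ring
  rw [lhs, rhs]
  refine Finset.sum_nbij' (fun p => ⟨insert p.1 p.2, p.1⟩) (fun p => ⟨p.2, p.1.erase p.2⟩)
    ?_ ?_ ?_ ?_ ?_
  · rintro ⟨i, T⟩ hp
    simp only [Finset.mem_sigma, Finset.mem_powersetCard] at hp ⊢
    obtain ⟨his, hT, hTc⟩ := hp
    have hiT : i ∉ T := fun h => Finset.notMem_erase i s (hT h)
    refine ⟨⟨?_, ?_⟩, Finset.mem_insert_self _ _⟩
    · exact Finset.insert_subset his (hT.trans (Finset.erase_subset _ _))
    · rw [Finset.card_insert_of_notMem hiT, hTc]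
  · rintro ⟨T, i⟩ hp
    simp only [Finset.mem_sigma, Finset.mem_powersetCard] at hp ⊢
    obtain ⟨⟨hTs, hTc⟩, hiT⟩ := hp
    refine ⟨hTs hiT, ?_, ?_⟩
    · intro j hj
      exact Finset.mem_erase.mpr ⟨(Finset.mem_erase.mp hj).1, hTs (Finset.mem_erase.mp hj).2⟩
    · rw [Finset.card_erase_of_mem hiT, hTc]; simp
  · rintro ⟨i, T⟩ hp
    simp only [Finset.mem_sigma, Finset.mem_powersetCard] at hp
    obtain ⟨his, hT, hTc⟩ := hp
    have hiT : i ∉ T := fun h => Finset.notMem_erase i s (hT h)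
    simp [Finset.erase_insert hiT]
  · rintro ⟨T, i⟩ hp
    simp only [Finset.mem_sigma, Finset.mem_powersetCard] at hp
    simp [Finset.insert_erase hp.2]
  · rintro ⟨i, T⟩ hp
    simp only [Finset.mem_sigma, Finset.mem_powersetCard] at hp
    obtain ⟨his, hT, hTc⟩ := hp
    have hiT : i ∉ T := fun h => Finset.notMem_erase i s (hT h)
    simp [Finset.erase_insert hiT]

lemma ident2 (s : Finset ι) (k : ℕ) :
    ∑ i ∈ s, E a (s.erase i) k = ((s.card - k : ℕ) : ℝ) * E a s k := by
  have lhs : ∑ i ∈ s, E a (s.erase i) k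
      = ∑ p ∈ s.sigma (fun i => (s.erase i).powersetCard k), ∏ j ∈ p.2, a j := by
    rw [Finset.sum_sigma]; simp [E]
  have rhs : ((s.card - k : ℕ) : ℝ) * E a s k
      = ∑ p ∈ (s.powersetCard k).sigma (fun T => s \ T), ∏ j ∈ p.1, a j := by
    rw [Finset.sum_sigma, E, Finset.mul_sum]
    refine Finset.sum_congr rfl fun T hT => ?_
    simp only [Finset.sum_const, nsmul_eq_mul,
      Finset.card_sdiff_of_subset (Finset.mem_powersetCard.mp hT).1,
      (Finset.mem_powersetCard.mp hT).2]
  rw [lhs, rhs]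
  refine Finset.sum_nbij' (fun p => ⟨p.2, p.1⟩) (fun p => ⟨p.2, p.1⟩) ?_ ?_ ?_ ?_ ?_
  · rintro ⟨i, T⟩ hp
    simp only [Finset.mem_sigma, Finset.mem_powersetCard, Finset.mem_sdiff] at hp ⊢
    obtain ⟨his, hT, hTc⟩ := hp
    exact ⟨⟨hT.trans (Finset.erase_subset _ _), hTc⟩, his,
      fun h => Finset.notMem_erase i s (hT h)⟩
  · rintro ⟨T, i⟩ hp
    simp only [Finset.mem_sigma, Finset.mem_powersetCard, Finset.mem_sdiff] at hp ⊢
    obtain ⟨⟨hTs, hTc⟩, his, hiT⟩ := hp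
    exact ⟨his, fun j hj => Finset.mem_erase.mpr ⟨fun h => hiT (h ▸ hj), hTs hj⟩, hTc⟩
  · rintro ⟨i, T⟩ _; rfl
  · rintro ⟨T, i⟩ _; rfl
  · rintro ⟨i, T⟩ _; rfl

lemma E_one (s : Finset ι) : E a s 1 = ∑ i ∈ s, a i := by
  simp [E, Finset.powersetCard_one, Finset.sum_map]


-- pairwise AM-GM double counting
lemma keyQ (ha : ∀ i, 0 ≤ a i) (s : Finset ι) (k : ℕ) :
    ((k:ℝ)+2) * ((k:ℝ)+1) * E a s (k+2)
      ≤ ((s.card - 1 - k : ℕ) : ℝ) * ∑ i ∈ s, (a i)^2 * E a (s.erase i) k := by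
  have A : ∑ i ∈ s, a i * E a (s.erase i) (k+1) = ((k:ℝ)+2) * E a s (k+2) := by
    have := ident1 a s (k+1); push_cast at this ⊢
    convert this using 2 <;> ring
  have h1 : ((k:ℝ)+2) * ((k:ℝ)+1) * E a s (k+2)
      = ∑ i ∈ s, ∑ j ∈ s.erase i, a i * a j * E a ((s.erase i).erase j) k := by
    calc ((k:ℝ)+2) * ((k:ℝ)+1) * E a s (k+2)
        = ((k:ℝ)+1) * ∑ i ∈ s, a i * E a (s.erase i) (k+1) := by rw [A]; ring
      _ = ∑ i ∈ s, ((k:ℝ)+1) * (a i * E a (s.erase i) (k+1)) := Finset.mul_sum _ _ _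
      _ = ∑ i ∈ s, ∑ j ∈ s.erase i, a i * a j * E a ((s.erase i).erase j) k := by
          refine Finset.sum_congr rfl fun i hi => ?_
          have B : ∑ j ∈ s.erase i, a j * E a ((s.erase i).erase j) k
              = ((k:ℝ)+1) * E a (s.erase i) (k+1) := ident1 a (s.erase i) k
          calc ((k:ℝ)+1) * (a i * E a (s.erase i) (k+1))
              = a i * (((k:ℝ)+1) * E a (s.erase i) (k+1)) := by ring
            _ = a i * ∑ j ∈ s.erase i, a j * E a ((s.erase i).erase j) k := by rw [B]
            _ = ∑ j ∈ s.erase i, a i * a j * E a ((s.erase i).erase j) k := by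
                rw [Finset.mul_sum]; exact Finset.sum_congr rfl fun j _ => by ring
  rw [h1]
  have l : ∀ g : ι → ι → ℝ, ∀ i : ι, ∑ j ∈ s.erase i, g i j
      = ∑ j ∈ s, if j ≠ i then g i j else 0 := by
    intro g i
    rw [← Finset.filter_ne' s i, Finset.sum_filter]
  have symm : ∀ g : ι → ι → ℝ, (∑ i ∈ s, ∑ j ∈ s.erase i, g i j)
      = ∑ i ∈ s, ∑ j ∈ s.erase i, g j i := by
    intro g
    rw [Finset.sum_congr rfl fun i _ => l g i,
      Finset.sum_congr rfl fun i _ => l (fun i j => g j i) i, Finset.sum_comm]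
    refine Finset.sum_congr rfl fun j _ => Finset.sum_congr rfl fun i _ => ?_
    exact if_congr ne_comm rfl rfl
  have step : ∑ i ∈ s, ∑ j ∈ s.erase i, a i * a j * E a ((s.erase i).erase j) k
      ≤ ∑ i ∈ s, ∑ j ∈ s.erase i, (a i)^2 * E a ((s.erase i).erase j) k := by
    have half : ∀ i ∈ s, ∀ j ∈ s.erase i,
        a i * a j * E a ((s.erase i).erase j) k
          ≤ (((a i)^2 + (a j)^2)/2) * E a ((s.erase i).erase j) k := by
      intro i _ j _
      have hE := E_nonneg a ha ((s.erase i).erase j) k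
      have : a i * a j ≤ ((a i)^2 + (a j)^2)/2 := by nlinarith [sq_nonneg (a i - a j)]
      exact mul_le_mul_of_nonneg_right this hE
    calc ∑ i ∈ s, ∑ j ∈ s.erase i, a i * a j * E a ((s.erase i).erase j) k
        ≤ ∑ i ∈ s, ∑ j ∈ s.erase i, (((a i)^2 + (a j)^2)/2) * E a ((s.erase i).erase j) k :=
          Finset.sum_le_sum fun i hi => Finset.sum_le_sum fun j hj => half i hi j hj
      _ = ∑ i ∈ s, ∑ j ∈ s.erase i, (a i)^2 * E a ((s.erase i).erase j) k := by
          have sw : (∑ i ∈ s, ∑ j ∈ s.erase i, ((a j)^2/2) * E a ((s.erase i).erase j) k)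
              = ∑ i ∈ s, ∑ j ∈ s.erase i, ((a i)^2/2) * E a ((s.erase i).erase j) k := by
            rw [symm (fun i j => ((a j)^2/2) * E a ((s.erase i).erase j) k)]
            refine Finset.sum_congr rfl fun i _ => Finset.sum_congr rfl fun j _ => ?_
            rw [Finset.erase_right_comm]
          calc ∑ i ∈ s, ∑ j ∈ s.erase i, (((a i)^2 + (a j)^2)/2) * E a ((s.erase i).erase j) k
              = (∑ i ∈ s, ∑ j ∈ s.erase i, ((a i)^2/2) * E a ((s.erase i).erase j) k)
               + ∑ i ∈ s, ∑ j ∈ s.erase i, ((a j)^2/2) * E a ((s.erase i).erase j) k := by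
                rw [← Finset.sum_add_distrib]
                refine Finset.sum_congr rfl fun i _ => ?_
                rw [← Finset.sum_add_distrib]
                exact Finset.sum_congr rfl fun j _ => by ring
            _ = ∑ i ∈ s, ∑ j ∈ s.erase i, (a i)^2 * E a ((s.erase i).erase j) k := by
                rw [sw, ← Finset.sum_add_distrib]
                refine Finset.sum_congr rfl fun i _ => ?_
                rw [← Finset.sum_add_distrib]
                exact Finset.sum_congr rfl fun j _ => by ring
  refine step.trans ?_
  rw [Finset.mul_sum]
  refine le_of_eq (Finset.sum_congr rfl fun i hi => ?_)
  rw [← Finset.mul_sum, ident2 a (s.erase i) k, Finset.card_erase_of_mem hi]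
  ring

lemma E_rec (ha : ∀ i, 0 ≤ a i) (s : Finset ι) (k : ℕ) (hk : k + 2 ≤ s.card) :
    ((k:ℝ)+2) * (s.card : ℝ) * E a s (k+2)
      ≤ ((s.card - (k+1) : ℕ) : ℝ) * (∑ i ∈ s, a i) * E a s (k+1) := by
  set m := s.card with hm
  set c : ℝ := ((m - (k+1) : ℕ) : ℝ) with hc
  have hcm : (m : ℝ) = c + (k+1) := by
    rw [hc, Nat.cast_sub (by omega : k+1 <= m)]; push_cast; ring
  have hsplit : (∑ i ∈ s, a i) * E a s (k+1)
      = ((k:ℝ)+2) * E a s (k+2) + ∑ i ∈ s, (a i)^2 * E a (s.erase i) k := by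
    rw [Finset.sum_mul]
    have : ∀ i ∈ s, a i * E a s (k+1)
        = a i * E a (s.erase i) (k+1) + (a i)^2 * E a (s.erase i) k := by
      intro i hi
      rw [E_split a hi k]; ring
    rw [Finset.sum_congr rfl this, Finset.sum_add_distrib]
    congr 1
    have := ident1 a s (k+1)
    push_cast at this
    rw [this]; ring
  have hQ := keyQ a ha s k
  have hcc : ((s.card - 1 - k : ℕ) : ℝ) = c := by
    rw [hc]; congr 1; omega
  rw [hcc] at hQ
  have hE2 := E_nonneg a ha s (k+2)
  have hc0 : 0 ≤ c := by rw [hc]; positivity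
  calc ((k:ℝ)+2) * (m:ℝ) * E a s (k+2)
      = ((k:ℝ)+2)*c*E a s (k+2) + ((k:ℝ)+2)*((k:ℝ)+1)*E a s (k+2) := by rw [hcm]; ring
    _ <= ((k:ℝ)+2)*c*E a s (k+2) + c * ∑ i ∈ s, (a i)^2 * E a (s.erase i) k := by linarith [hQ]
    _ = c * (((k:ℝ)+2) * E a s (k+2) + ∑ i ∈ s, (a i)^2 * E a (s.erase i) k) := by ring
    _ = c * ((∑ i ∈ s, a i) * E a s (k+1)) := by rw [← hsplit]
    _ = c * (∑ i ∈ s, a i) * E a s (k+1) := by ring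

lemma maclaurin (ha : ∀ i, 0 ≤ a i) (s : Finset ι) (k : ℕ) (hk1 : 1 ≤ k)
    (hks : k ≤ s.card) :
    E a s k ≤ (s.card.choose k : ℝ) * ((∑ i ∈ s, a i) / s.card)^k := by
  set m := s.card with hm
  have hm0 : 0 < m := lt_of_lt_of_le hk1 hks
  have hmr : (0:ℝ) < m := by exact_mod_cast hm0
  have he1 : 0 ≤ ∑ i ∈ s, a i := Finset.sum_nonneg fun i _ => ha i
  induction k with
  | zero => omega
  | succ j ih =>
    rcases Nat.eq_or_lt_of_le hk1 with h1 | h1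
    · -- j = 0
      have hj : j = 0 := by omega
      subst hj
      rw [E_one, pow_one, Nat.choose_one_right]
      rw [mul_div_assoc', mul_comm, mul_div_assoc, div_self (ne_of_gt hmr), mul_one]
    · -- j ≥ 1
      have hj1 : 1 ≤ j := by omega
      obtain ⟨i0, rfl⟩ : ∃ i0, j = i0 + 1 := ⟨j - 1, by omega⟩
      have hIH := ih hj1 (by omega)
      set e1 := ∑ i ∈ s, a i
      set c : ℝ := ((m - (i0+1+1) + 1 : ℕ) : ℝ) with hcdef
      have hrec := E_rec a ha s i0 (by omega)
      have hc' : ((m - (i0+1) : ℕ) : ℝ) = c := by rw [hcdef]; congr 1; omega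
      rw [hc'] at hrec
      have hc0 : 0 ≤ c := by rw [hcdef]; positivity
      have hmul : c * e1 * E a s (i0+1) ≤ c * e1 * ((m.choose (i0+1) : ℝ) * (e1/m)^(i0+1)) := by
        apply mul_le_mul_of_nonneg_left hIH (by positivity)
      have hch : ((m.choose (i0+2) : ℕ) : ℝ) * ((i0:ℝ)+2) = ((m.choose (i0+1) : ℕ) : ℝ) * c := by
        have h2 : m.choose (i0+2) * (i0+2) = m.choose (i0+1) * (m - (i0+1)) :=
          Nat.choose_succ_right_eq m (i0+1)
        have h3 : ((m.choose (i0+2) : ℕ) : ℝ) * (((i0+2 : ℕ)) : ℝ)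
            = ((m.choose (i0+1) : ℕ) : ℝ) * ((m - (i0+1) : ℕ) : ℝ) := by
          exact_mod_cast congrArg (Nat.cast : ℕ → ℝ) h2
        rw [hc'] at h3
        rw [← h3]; push_cast; ring
      have hkey : c * e1 * ((m.choose (i0+1) : ℝ) * (e1/m)^(i0+1))
          = (((i0:ℝ)+2) * m) * ((m.choose (i0+2) : ℝ) * (e1/m)^(i0+2)) := by
        rw [pow_succ (e1/m) (i0+1)]
        have hmm : (m:ℝ) * (m:ℝ)⁻¹ = 1 := mul_inv_cancel₀ hmr.ne'
        linear_combination (-((e1/m)^(i0+1) * e1)) * hch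
          + (-(((i0:ℝ)+2) * (m.choose (i0+2) : ℝ) * (e1/m)^(i0+1) * e1)) * hmm
      have final : (((i0:ℝ)+2) * m) * E a s (i0+2)
          ≤ (((i0:ℝ)+2) * m) * ((m.choose (i0+2) : ℝ) * (e1/m)^(i0+2)) := by
        calc (((i0:ℝ)+2) * m) * E a s (i0+2) = ((i0:ℝ)+2) * (m:ℝ) * E a s (i0+2) := by ring
          _ ≤ c * e1 * E a s (i0+1) := hrec
          _ ≤ c * e1 * ((m.choose (i0+1) : ℝ) * (e1/m)^(i0+1)) := hmul
          _ = _ := hkey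
      have hpos : (0:ℝ) < ((i0:ℝ)+2) * m := by positivity
      exact le_of_mul_le_mul_left final hpos

open scoped Classical in
lemma fiber_card {N n : ℕ} (S : Finset (Fin N)) (hS : S.card = n) :
    (Finset.univ.filter (fun σ : Fin n ↪ Fin N => Finset.univ.map σ = S)).card
      = n.factorial := by
  have key : (Finset.univ.filter (fun σ : Fin n ↪ Fin N => Finset.univ.map σ = S)).card
      = (Finset.univ : Finset (Fin n ↪ (S : Set (Fin N)))).card := by
    apply Finset.card_bij (fun σ hσ => Function.Embedding.codRestrict (S : Set (Fin N)) σ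
      (fun a => by
        have h : Finset.univ.map σ = S := (Finset.mem_filter.mp hσ).2
        have : σ a ∈ Finset.univ.map σ := Finset.mem_map_of_mem σ (Finset.mem_univ a)
        rw [h] at this
        exact this))
    · intro σ hσ; exact Finset.mem_univ _
    · intro σ1 h1 σ2 h2 heq
      ext a
      have h2 := congrArg Subtype.val (DFunLike.congr_fun heq a)
      simp only [Function.Embedding.codRestrict_apply] at h2
      simp [h2]
    · intro τ _
      refine ⟨τ.trans (Function.Embedding.subtype _), ?_, ?_⟩
      · rw [Finset.mem_filter]
        refine ⟨Finset.mem_univ _, ?_⟩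
        apply Finset.eq_of_subset_of_card_le
        · intro y hy
          simp only [Finset.mem_map] at hy
          obtain ⟨a, _, rfl⟩ := hy
          exact (τ a).2
        · rw [Finset.card_map, Finset.card_univ, Fintype.card_fin, hS]
      · ext a; rfl
  rw [key, Finset.card_univ, Fintype.card_embedding_eq]
  rw [show Fintype.card (S : Set (Fin N)) = S.card from by
      simpa using Fintype.card_coe S, hS, Fintype.card_fin, Nat.descFactorial_self]

open scoped Classical in
lemma emb_sum {N n : ℕ} (b : Fin N → ℝ) :
    ∑ σ : Fin n ↪ Fin N, ∏ i, b (σ i)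
      = (n.factorial : ℝ) * E b Finset.univ n := by
  classical
  have part : ∑ σ : Fin n ↪ Fin N, ∏ i, b (σ i)
      = ∑ S ∈ (Finset.univ : Finset (Finset (Fin N))),
          ∑ σ ∈ Finset.univ.filter (fun σ : Fin n ↪ Fin N => Finset.univ.map σ = S),
            ∏ i, b (σ i) := by
    exact (Finset.sum_fiberwise _ _ _).symm
  rw [part]
  have inner : ∀ S : Finset (Fin N),
      (∑ σ ∈ Finset.univ.filter (fun σ : Fin n ↪ Fin N => Finset.univ.map σ = S),
        ∏ i, b (σ i))
      = (Finset.univ.filter (fun σ : Fin n ↪ Fin N => Finset.univ.map σ = S)).card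
          * ∏ j ∈ S, b j := by
    intro S
    have hc : ∀ σ ∈ Finset.univ.filter (fun σ : Fin n ↪ Fin N => Finset.univ.map σ = S),
        (∏ i, b (σ i)) = ∏ j ∈ S, b j := by
      intro σ hσ
      have h : Finset.univ.map σ = S := (Finset.mem_filter.mp hσ).2
      rw [← h, Finset.prod_map]
    rw [Finset.sum_congr rfl hc, Finset.sum_const, nsmul_eq_mul]
  rw [Finset.sum_congr rfl fun S _ => inner S]
  have hzero : ∀ S ∈ (Finset.univ : Finset (Finset (Fin N))),
      S ∉ Finset.powersetCard n Finset.univ →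
      ((Finset.univ.filter (fun σ : Fin n ↪ Fin N => Finset.univ.map σ = S)).card : ℝ)
        * ∏ j ∈ S, b j = 0 := by
    intro S _ hS
    have : (Finset.univ.filter (fun σ : Fin n ↪ Fin N => Finset.univ.map σ = S)).card = 0 := by
      rw [Finset.card_eq_zero, Finset.filter_eq_empty_iff]
      intro σ _ h
      apply hS
      rw [Finset.mem_powersetCard]
      exact ⟨Finset.subset_univ _, by rw [← h, Finset.card_map, Finset.card_univ,
        Fintype.card_fin]⟩
    rw [this, Nat.cast_zero, zero_mul]
  rw [← Finset.sum_subset (Finset.subset_univ (Finset.powersetCard n Finset.univ)) hzero]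
  rw [E, Finset.mul_sum]
  refine Finset.sum_congr rfl fun S hS => ?_
  rw [fiber_card S (Finset.mem_powersetCard.mp hS).2]

section Hoeff
open Real

lemma hoeff_scalar (p : ℝ) (hp0 : 0 ≤ p) (hp1 : p ≤ 1) (t : ℝ) (ht : 0 ≤ t) :
    1 - p + p * Real.exp t ≤ Real.exp (t * p + t^2 / 8) := by
  set A : ℝ → ℝ := fun u => 1 - p + p * Real.exp u with hAdef
  have hApos : ∀ u, 0 < A u := by
    intro u
    have he := Real.exp_pos u
    have h1 : 0 ≤ p * Real.exp u := mul_nonneg hp0 he.le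
    show 0 < 1 - p + p * Real.exp u
    nlinarith [he, hp0, hp1]
  have hA : ∀ u, HasDerivAt A (p * Real.exp u) u := by
    intro u
    exact ((Real.hasDerivAt_exp u).const_mul p).const_add (1-p)
  set G : ℝ → ℝ := fun u => p + u/4 - p * Real.exp u / A u with hGdef
  have hG : ∀ u, HasDerivAt G (1/4 - p * Real.exp u * (1-p) / (A u)^2) u := by
    intro u
    have hnum : HasDerivAt (fun u => p * Real.exp u) (p * Real.exp u) u :=
      (Real.hasDerivAt_exp u).const_mul p
    have hdiv : HasDerivAt (fun u => p * Real.exp u / A u)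
        ((p * Real.exp u * A u - p * Real.exp u * (p * Real.exp u)) / (A u)^2) u :=
      hnum.div (hA u) (ne_of_gt (hApos u))
    have hlin : HasDerivAt (fun u : ℝ => p + u/4) (1/4) u := by
      simpa using ((hasDerivAt_id u).div_const 4).const_add p
    have := hlin.sub hdiv
    refine this.congr_deriv ?_
    rw [hAdef]
    field_simp
    ring
  have hGnonneg : ∀ u, 0 ≤ 1/4 - p * Real.exp u * (1-p) / (A u)^2 := by
    intro u
    rw [sub_nonneg, div_le_iff₀ (pow_pos (hApos u) 2)]
    have : A u = (1-p) + p * Real.exp u := rfl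
    nlinarith [sq_nonneg ((1-p) - p * Real.exp u)]
  have hGmono : Monotone G :=
    monotone_of_deriv_nonneg (fun u => (hG u).differentiableAt)
      (fun u => by rw [(hG u).deriv]; exact hGnonneg u)
  have hG0 : G 0 = 0 := by
    simp only [hGdef, hAdef]
    norm_num
  set g : ℝ → ℝ := fun u => u * p + u^2/8 - Real.log (A u) with hgdef
  have hg : ∀ u, HasDerivAt g (G u) u := by
    intro u
    have hlog : HasDerivAt (fun v => Real.log (A v)) (p * Real.exp u / A u) u :=
      (hA u).log (ne_of_gt (hApos u))
    have hpoly : HasDerivAt (fun v : ℝ => v * p + v^2/8) (p + u/4) u := by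
      have h1 : HasDerivAt (fun v : ℝ => v * p) p u := by
        simpa using (hasDerivAt_id u).mul_const p
      have h2 : HasDerivAt (fun v : ℝ => v^2/8) (u/4) u := by
        have := ((hasDerivAt_pow 2 u)).div_const 8
        norm_num at this
        refine this.congr_deriv ?_
        ring
      exact h1.add h2
    have := hpoly.sub hlog
    exact this
  have hgmono : MonotoneOn g (Set.Ici 0) := by
    apply monotoneOn_of_deriv_nonneg (convex_Ici 0)
      (Continuous.continuousOn (by
        have hd : Differentiable ℝ g := fun u => (hg u).differentiableAt
        exact hd.continuous))
      (fun u _ => (hg u).differentiableAt.differentiableWithinAt)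
    intro u hu
    rw [(hg u).deriv]
    have : (0:ℝ) ≤ u := le_of_lt (by simpa using hu)
    calc (0:ℝ) = G 0 := hG0.symm
      _ ≤ G u := hGmono this
  have hg0 : g 0 = 0 := by
    simp only [hgdef, hAdef]
    norm_num
  have hgt : 0 ≤ g t := by
    rw [← hg0]
    exact hgmono (Set.mem_Ici.mpr le_rfl) (Set.mem_Ici.mpr ht) ht
  have : Real.log (A t) ≤ t * p + t^2/8 := by
    simp only [hgdef] at hgt
    linarith
  have := (Real.log_le_iff_le_exp (hApos t)).mp this
  simpa [hAdef] using this

end Hoeff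


end Aux

/-- **Hoeffding's inequality for sampling without replacement** (one-sided, population in
`[0,1]`). The population is `x : Fin N → ℝ`; a uniformly random sample of size `n` without
replacement corresponds to a uniformly random injection `σ : Fin n ↪ Fin N`, the `i`-th sample
being `x (σ i)`. The probability of an event is the fraction of injections realizing it. -/
theorem hoeffding_sampling_without_replacement
    (N n : ℕ) (hn : 1 ≤ n) (hnN : n ≤ N)
    (x : Fin N → ℝ) (hx : ∀ i, x i ∈ Set.Icc (0 : ℝ) 1)
    (μ : ℝ) (hμ : μ = (1 / N : ℝ) * ∑ i, x i)
    (ε : ℝ) (hε : 0 < ε) :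
    ((Finset.univ.filter (fun σ : Fin n ↪ Fin N =>
        (1 / n : ℝ) * ∑ i, x (σ i) - μ ≥ ε)).card : ℝ)
      / (Fintype.card (Fin n ↪ Fin N) : ℝ)
      ≤ Real.exp (-2 * n * ε ^ 2) := by
  have hN : 1 ≤ N := le_trans hn hnN
  have hNr : (0:ℝ) < N := by exact_mod_cast lt_of_lt_of_le Nat.one_pos hN
  have hnr : (0:ℝ) < n := by exact_mod_cast lt_of_lt_of_le Nat.one_pos hn
  set lam : ℝ := 4 * ε with hlam
  have hlam0 : 0 ≤ lam := by positivity
  set b : Fin N → ℝ := fun i => Real.exp (lam * x i) with hbdef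
  have hb0 : ∀ i, 0 ≤ b i := fun i => (Real.exp_pos _).le
  -- population mean facts
  have hsumx : ∑ i, x i = N * μ := by
    rw [hμ]; field_simp
  have hμ0 : 0 ≤ μ := by
    rw [hμ]
    exact mul_nonneg (by positivity) (Finset.sum_nonneg fun i _ => (hx i).1)
  have hμ1 : μ ≤ 1 := by
    rw [hμ]
    have : ∑ i, x i ≤ (N:ℝ) := by
      calc ∑ i, x i ≤ ∑ _i : Fin N, (1:ℝ) := Finset.sum_le_sum fun i _ => (hx i).2
        _ = N := by simp
    rw [div_mul_eq_mul_div, one_mul, div_le_one hNr]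
    exact this
  -- MGF bound: ∑ b i ≤ N * exp(lam μ + lam²/8)
  have hconv : ∀ i, b i ≤ 1 - x i + x i * Real.exp lam := by
    intro i
    have h := convexOn_exp.2 (Set.mem_univ (0:ℝ)) (Set.mem_univ lam)
      (by linarith [(hx i).1, (hx i).2] : (0:ℝ) ≤ 1 - x i) (hx i).1 (by ring)
    simpa [hbdef, smul_eq_mul, mul_comm] using h
  have hmgf : ∑ i, b i ≤ (N:ℝ) * Real.exp (lam * μ + lam^2/8) := by
    calc ∑ i, b i ≤ ∑ i, (1 - x i + x i * Real.exp lam) :=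
          Finset.sum_le_sum fun i _ => hconv i
      _ = (N:ℝ) * (1 - μ + μ * Real.exp lam) := by
          rw [Finset.sum_add_distrib, Finset.sum_sub_distrib, ← Finset.sum_mul, hsumx]
          simp [Finset.card_univ]
          ring
      _ ≤ (N:ℝ) * Real.exp (lam * μ + lam^2/8) := by
          apply mul_le_mul_of_nonneg_left _ hNr.le
          exact hoeff_scalar μ hμ0 hμ1 lam hlam0
  have hdivN : (∑ i, b i) / N ≤ Real.exp (lam * μ + lam^2/8) := by
    rw [div_le_iff₀ hNr]
    linarith [hmgf]
  -- Maclaurin bound on the sum over injections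
  have hcard : Fintype.card (Fin n ↪ Fin N) = n.factorial * N.choose n := by
    rw [Fintype.card_embedding_eq, Fintype.card_fin, Fintype.card_fin,
      Nat.descFactorial_eq_factorial_mul_choose]
  have hEbound : E b Finset.univ n
      ≤ (N.choose n : ℝ) * Real.exp (lam * μ + lam^2/8) ^ n := by
    have hm := maclaurin b hb0 Finset.univ n hn
      (by rw [Finset.card_univ, Fintype.card_fin]; exact hnN)
    rw [Finset.card_univ, Fintype.card_fin] at hm
    refine hm.trans ?_
    apply mul_le_mul_of_nonneg_left _ (by positivity)
    exact pow_le_pow_left₀ (div_nonneg (Finset.sum_nonneg fun i _ => hb0 i) hNr.le) hdivN n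
  have hsum_emb : ∑ σ : Fin n ↪ Fin N, ∏ i, b (σ i)
      ≤ (Fintype.card (Fin n ↪ Fin N) : ℝ) * Real.exp (lam * μ + lam^2/8) ^ n := by
    rw [emb_sum b, hcard]
    push_cast
    rw [mul_assoc]
    exact mul_le_mul_of_nonneg_left hEbound (by positivity)
  -- Markov on the filtered set
  set F := Finset.univ.filter (fun σ : Fin n ↪ Fin N =>
      (1 / n : ℝ) * ∑ i, x (σ i) - μ ≥ ε) with hF
  have hlow : (F.card : ℝ) * Real.exp (lam * (n * (μ + ε)))
      ≤ ∑ σ : Fin n ↪ Fin N, ∏ i, b (σ i) := by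
    calc (F.card : ℝ) * Real.exp (lam * (n * (μ + ε)))
        = ∑ _σ ∈ F, Real.exp (lam * (n * (μ + ε))) := by
          rw [Finset.sum_const, nsmul_eq_mul]
      _ ≤ ∑ σ ∈ F, ∏ i, b (σ i) := by
          refine Finset.sum_le_sum fun σ hσ => ?_
          have hσ2 : (1 / n : ℝ) * ∑ i, x (σ i) - μ ≥ ε := (Finset.mem_filter.mp hσ).2
          have hs : (n:ℝ) * (μ + ε) ≤ ∑ i, x (σ i) := by
            have := hσ2
            rw [ge_iff_le, le_sub_iff_add_le] at this
            calc (n:ℝ) * (μ + ε) = n * (ε + μ) := by ring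
              _ ≤ n * ((1/n) * ∑ i, x (σ i)) := by
                  apply mul_le_mul_of_nonneg_left this hnr.le
              _ = ∑ i, x (σ i) := by field_simp
          have : ∏ i, b (σ i) = Real.exp (lam * ∑ i, x (σ i)) := by
            rw [Finset.mul_sum, Real.exp_sum]
          rw [this]
          apply Real.exp_le_exp.mpr
          exact mul_le_mul_of_nonneg_left hs hlam0
      _ ≤ ∑ σ : Fin n ↪ Fin N, ∏ i, b (σ i) := by
          apply Finset.sum_le_sum_of_subset_of_nonneg (Finset.subset_univ F)
          intro σ _ _
          exact Finset.prod_nonneg fun i _ => hb0 (σ i)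
  -- combine
  have hCpos : (0:ℝ) < (Fintype.card (Fin n ↪ Fin N) : ℝ) := by
    have : 0 < Fintype.card (Fin n ↪ Fin N) := by
      rw [hcard]
      exact Nat.mul_pos (Nat.factorial_pos n) (Nat.choose_pos hnN)
    exact_mod_cast this
  have hexp : Real.exp (lam * μ + lam^2/8) ^ n
      = Real.exp (n * (lam * μ + lam^2/8)) := by
    rw [Real.exp_nat_mul]
  have hmain : (F.card : ℝ) * Real.exp (lam * (n * (μ + ε)))
      ≤ (Fintype.card (Fin n ↪ Fin N) : ℝ) * Real.exp (n * (lam * μ + lam^2/8)) := by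
    rw [← hexp]
    exact hlow.trans hsum_emb
  rw [div_le_iff₀ hCpos]
  have hdiff : (-2 : ℝ) * n * ε^2 = n * (lam * μ + lam^2/8) - lam * (n * (μ + ε)) := by
    rw [hlam]; ring
  have key : (F.card : ℝ)
      ≤ (Fintype.card (Fin n ↪ Fin N) : ℝ) * Real.exp (-2 * n * ε^2) := by
    have h3 : (Fintype.card (Fin n ↪ Fin N) : ℝ) * Real.exp (-2 * n * ε^2)
        * Real.exp (lam * (n * (μ + ε)))
        = (Fintype.card (Fin n ↪ Fin N) : ℝ) * Real.exp (n * (lam * μ + lam^2/8)) := by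
      rw [mul_assoc, ← Real.exp_add, hdiff]
      ring_nf
    exact le_of_mul_le_mul_right (by rw [h3]; exact hmain) (Real.exp_pos _)
  calc (F.card : ℝ) ≤ (Fintype.card (Fin n ↪ Fin N) : ℝ) * Real.exp (-2 * n * ε^2) := key
    _ = Real.exp (-2 * n * ε^2) * (Fintype.card (Fin n ↪ Fin N) : ℝ) := by ring
end

section
/- Let a < b be real numbers and let x_1, …, x_N be a finite population of N real numbers, each contained in the interval [a,b], with population mean μ = (1/N)∑_{i=1}^N x_i. Let X_1, …, X_n (with 1 ≤ n ≤ N) denote a uniformly random sample drawn without replacement from this population. Then for every ε > 0, the probability that |(1/n)∑_{i=1}^n X_i − μ| ≥ ε is at most 2·exp(−2 n ε² / (b−a)²). -/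
open scoped Classical

open Real Finset


lemma den_pos {p : ℝ} (hp0 : 0 ≤ p) (hp1 : p ≤ 1) (h : ℝ) :
    0 < 1 - p + p * Real.exp h := by
  rcases eq_or_lt_of_le hp1 with rfl | hp1
  · simpa using Real.exp_pos h
  · have := Real.exp_pos h
    nlinarith

lemma hasDerivAt_f {p : ℝ} (hp0 : 0 ≤ p) (hp1 : p ≤ 1) (h : ℝ) :
    HasDerivAt (fun h => p * h + h ^ 2 / 8 - Real.log (1 - p + p * Real.exp h))
      (p + h / 4 - p * Real.exp h / (1 - p + p * Real.exp h)) h := by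
  have h1 : HasDerivAt (fun h : ℝ => p * h) p h := by
    simpa using (hasDerivAt_id h).const_mul p
  have h2 : HasDerivAt (fun h : ℝ => h ^ 2 / 8) (h / 4) h := by
    have := (hasDerivAt_pow 2 h).div_const 8
    refine this.congr_deriv ?_
    ring
  have h3 : HasDerivAt (fun h : ℝ => 1 - p + p * Real.exp h) (p * Real.exp h) h := by
    simpa using ((Real.hasDerivAt_exp h).const_mul p).const_add (1 - p)
  have h4 := (h3.log (den_pos hp0 hp1 h).ne')
  exact (h1.add h2).sub h4

lemma hasDerivAt_g {p : ℝ} (hp0 : 0 ≤ p) (hp1 : p ≤ 1) (h : ℝ) :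
    HasDerivAt (fun h => p + h / 4 - p * Real.exp h / (1 - p + p * Real.exp h))
      (1 / 4 - (1 - p) * (p * Real.exp h) / (1 - p + p * Real.exp h) ^ 2) h := by
  have h2 : HasDerivAt (fun h : ℝ => p + h / 4) (1 / 4) h := by
    simpa using ((hasDerivAt_id h).div_const 4).const_add p
  have h3 : HasDerivAt (fun h : ℝ => p * Real.exp h) (p * Real.exp h) h :=
    (Real.hasDerivAt_exp h).const_mul p
  have h4 : HasDerivAt (fun h : ℝ => 1 - p + p * Real.exp h) (p * Real.exp h) h := by
    simpa using ((Real.hasDerivAt_exp h).const_mul p).const_add (1 - p)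
  have h5 := h3.div h4 (den_pos hp0 hp1 h).ne'
  have := h2.sub h5
  refine this.congr_deriv ?_
  field_simp
  ring

lemma key_ineq {p : ℝ} (hp0 : 0 ≤ p) (hp1 : p ≤ 1) (h : ℝ) :
    1 - p + p * Real.exp h ≤ Real.exp (p * h + h ^ 2 / 8) := by
  set f : ℝ → ℝ := fun h => p * h + h ^ 2 / 8 - Real.log (1 - p + p * Real.exp h) with hf
  set g : ℝ → ℝ := fun h => p + h / 4 - p * Real.exp h / (1 - p + p * Real.exp h) with hg
  have hgmono : Monotone g := by
    apply monotone_of_deriv_nonneg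
    · exact fun x => (hasDerivAt_g hp0 hp1 x).differentiableAt
    · intro x
      rw [(hasDerivAt_g hp0 hp1 x).deriv]
      have hd := den_pos hp0 hp1 x
      have : 4 * ((1 - p) * (p * Real.exp x)) ≤ (1 - p + p * Real.exp x) ^ 2 := by nlinarith [sq_nonneg (1 - p - p * Real.exp x)]
      rw [sub_nonneg, div_le_iff₀ (by positivity)]
      linarith
  have hg0 : g 0 = 0 := by
    simp only [hg, Real.exp_zero, mul_one]
    field_simp
    ring
  have hf0 : f 0 = 0 := by
    simp [hf]
  have hfderiv : ∀ x, deriv f x = g x := fun x => (hasDerivAt_f hp0 hp1 x).deriv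
  have hfdiff : Differentiable ℝ f := fun x => (hasDerivAt_f hp0 hp1 x).differentiableAt
  have hfnonneg : 0 ≤ f h := by
    rcases le_total 0 h with hh | hh
    · have : MonotoneOn f (Set.Ici 0) := by
        apply monotoneOn_of_deriv_nonneg (convex_Ici 0) hfdiff.continuous.continuousOn
          hfdiff.differentiableOn
        intro x hx
        rw [interior_Ici] at hx
        rw [hfderiv x]
        rw [← hg0]
        exact hgmono hx.le
      have := this Set.self_mem_Ici hh hh
      rwa [hf0] at this
    · have : AntitoneOn f (Set.Iic 0) := by
        apply antitoneOn_of_deriv_nonpos (convex_Iic 0) hfdiff.continuous.continuousOn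
          hfdiff.differentiableOn
        intro x hx
        rw [interior_Iic] at hx
        rw [hfderiv x, ← hg0]
        exact hgmono hx.le
      have := this hh Set.self_mem_Iic hh
      rwa [hf0] at this
  have hd := den_pos hp0 hp1 h
  calc 1 - p + p * Real.exp h = Real.exp (Real.log (1 - p + p * Real.exp h)) :=
        (Real.exp_log hd).symm
    _ ≤ Real.exp (p * h + h ^ 2 / 8) := by
        apply Real.exp_le_exp.2
        have := hfnonneg
        simp only [hf] at this
        linarith

/-- Hoeffding's lemma for a uniform random variable on a finite type. -/
lemma hoeffding_finite {β : Type*} [Fintype β] [Nonempty β] {a b : ℝ}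
    (y : β → ℝ) (hy : ∀ i, y i ∈ Set.Icc a b) (t : ℝ) :
    (∑ i, Real.exp (t * y i)) / (Fintype.card β : ℝ)
      ≤ Real.exp (t * ((∑ i, y i) / (Fintype.card β : ℝ)) + t ^ 2 * (b - a) ^ 2 / 8) := by
  have hM : (0 : ℝ) < (Fintype.card β : ℝ) := by
    exact_mod_cast Fintype.card_pos
  set M : ℝ := (Fintype.card β : ℝ) with hMdef
  set m : ℝ := (∑ i, y i) / M with hm
  have hab : a ≤ b := by
    obtain ⟨i⟩ := ‹Nonempty β›
    exact le_trans (hy i).1 (hy i).2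
  rcases eq_or_lt_of_le hab with rfl | hab'
  · -- degenerate case a = b : all values equal a
    have hya : ∀ i, y i = a := fun i => le_antisymm (hy i).2 (hy i).1
    have hsum : (∑ i, y i) = M * a := by
      simp [hya, hMdef, mul_comm]
    have hma : m = a := by rw [hm, hsum]; field_simp
    have : (∑ i, Real.exp (t * y i)) = M * Real.exp (t * a) := by
      simp [hya, hMdef, mul_comm]
    rw [this, hma, mul_div_cancel_left₀ _ hM.ne']
    apply Real.exp_le_exp.2
    nlinarith [sq_nonneg t, sq_nonneg (a - a)]
  · have hc : (0:ℝ) < b - a := by linarith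
    -- mean is in [a,b]
    have hmab : m ∈ Set.Icc a b := by
      constructor
      · rw [hm, le_div_iff₀ hM]
        have := Finset.card_nsmul_le_sum Finset.univ y a (fun i _ => (hy i).1)
        simpa [hMdef, nsmul_eq_mul, mul_comm] using this
      · rw [hm, div_le_iff₀ hM]
        have := Finset.sum_le_card_nsmul Finset.univ y b (fun i _ => (hy i).2)
        simpa [hMdef, nsmul_eq_mul, mul_comm] using this
    set p : ℝ := (m - a) / (b - a) with hp
    have hp0 : 0 ≤ p := div_nonneg (by linarith [hmab.1]) hc.le
    have hp1 : p ≤ 1 := by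
      rw [hp, div_le_one hc]; linarith [hmab.2]
    -- pointwise convexity bound
    have hpt : ∀ i, Real.exp (t * y i) ≤
        ((b - y i) / (b - a)) * Real.exp (t * a) + ((y i - a) / (b - a)) * Real.exp (t * b) := by
      intro i
      have h1 : (0:ℝ) ≤ (b - y i) / (b - a) := div_nonneg (by linarith [(hy i).2]) hc.le
      have h2 : (0:ℝ) ≤ (y i - a) / (b - a) := div_nonneg (by linarith [(hy i).1]) hc.le
      have h3 : (b - y i) / (b - a) + (y i - a) / (b - a) = 1 := by
        field_simp
        ring
      have hcx := convexOn_exp.2 (Set.mem_univ (t * a)) (Set.mem_univ (t * b)) h1 h2 h3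
      simp only [smul_eq_mul] at hcx
      have harg : (b - y i) / (b - a) * (t * a) + (y i - a) / (b - a) * (t * b) = t * y i := by
        field_simp
        ring
      rw [harg] at hcx
      exact hcx
    -- average the bound
    have havg : (∑ i, Real.exp (t * y i)) / M ≤
        ((b - m) / (b - a)) * Real.exp (t * a) + ((m - a) / (b - a)) * Real.exp (t * b) := by
      rw [div_le_iff₀ hM]
      calc (∑ i, Real.exp (t * y i))
          ≤ ∑ i, (((b - y i) / (b - a)) * Real.exp (t * a)
              + ((y i - a) / (b - a)) * Real.exp (t * b)) :=
            Finset.sum_le_sum fun i _ => hpt i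
        _ = (((b:ℝ) * M - ∑ i, y i) / (b - a)) * Real.exp (t * a)
              + (((∑ i, y i) - a * M) / (b - a)) * Real.exp (t * b) := by
            rw [Finset.sum_add_distrib, ← Finset.sum_mul, ← Finset.sum_mul]
            congr 2
            · rw [← Finset.sum_div, Finset.sum_sub_distrib]
              simp [hMdef, nsmul_eq_mul, mul_comm]
            · rw [← Finset.sum_div, Finset.sum_sub_distrib]
              simp [hMdef, nsmul_eq_mul, mul_comm]
        _ = (((b - m) / (b - a)) * Real.exp (t * a)
              + ((m - a) / (b - a)) * Real.exp (t * b)) * M := by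
            have hsm : (∑ i, y i) = m * M := by rw [hm]; field_simp
            rw [hsm]
            field_simp
    -- apply the key inequality with h = t(b-a)
    have hkey := key_ineq hp0 hp1 (t * (b - a))
    have hmain : ((b - m) / (b - a)) * Real.exp (t * a) + ((m - a) / (b - a)) * Real.exp (t * b)
        ≤ Real.exp (t * m + t ^ 2 * (b - a) ^ 2 / 8) := by
      have e1 : ((b - m) / (b - a)) = 1 - p := by rw [hp]; field_simp; ring
      have e2 : Real.exp (t * b) = Real.exp (t * a) * Real.exp (t * (b - a)) := by
        rw [← Real.exp_add]; ring_nf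
      rw [e1, e2, hp]
      have := mul_le_mul_of_nonneg_left hkey (Real.exp_pos (t * a)).le
      calc (1 - (m - a)/(b - a)) * Real.exp (t * a)
            + (m - a)/(b - a) * (Real.exp (t * a) * Real.exp (t * (b - a)))
          = Real.exp (t * a) * (1 - (m - a)/(b-a) + (m - a)/(b-a) * Real.exp (t * (b - a))) := by
            ring
        _ ≤ Real.exp (t * a) * Real.exp ((m - a)/(b - a) * (t * (b - a)) + (t * (b - a)) ^ 2 / 8) :=
            this
        _ = Real.exp (t * m + t ^ 2 * (b - a) ^ 2 / 8) := by
            rw [← Real.exp_add]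
            congr 1
            field_simp
            ring
    exact le_trans havg hmain

def embSuccEquiv (n : ℕ) (α : Type*) :
    (Fin (n + 1) ↪ α) ≃ Σ j : α, (Fin n ↪ { i : α // i ≠ j }) where
  toFun σ := ⟨σ 0, ⟨fun k => ⟨σ k.succ, fun h => Fin.succ_ne_zero k (σ.injective h)⟩,
    fun k l hkl => Fin.succ_injective n (σ.injective (congrArg Subtype.val hkl))⟩⟩
  invFun := fun ⟨j, e⟩ =>
    ⟨Fin.cons j (fun k => (e k).1), by
      intro k l hkl
      induction k using Fin.cases with
      | zero =>
        induction l using Fin.cases with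
        | zero => rfl
        | succ l =>
          simp only [Fin.cons_zero, Fin.cons_succ] at hkl
          exact absurd hkl.symm (e l).2
      | succ k =>
        induction l using Fin.cases with
        | zero =>
          simp only [Fin.cons_zero, Fin.cons_succ] at hkl
          exact absurd hkl (e k).2
        | succ l =>
          simp only [Fin.cons_succ] at hkl
          exact congrArg Fin.succ (e.injective (Subtype.ext hkl))⟩
  left_inv σ := by
    ext k
    induction k using Fin.cases with
    | zero => rfl
    | succ k => rfl
  right_inv := fun ⟨j, e⟩ => by
    apply Sigma.ext
    case fst => rfl
    case snd =>
      apply heq_of_eq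
      ext k
      simp only [Function.Embedding.coeFn_mk, Fin.cons_succ]
      rfl

lemma mgf_bound (a b : ℝ) (hab : a ≤ b) (t : ℝ) : ∀ (n : ℕ) {α : Type} [Fintype α]
    [DecidableEq α] (y : α → ℝ), (∀ i, y i ∈ Set.Icc a b) → n ≤ Fintype.card α →
    (∑ σ : Fin n ↪ α, Real.exp (t * ∑ i, y (σ i))) / (Fintype.card (Fin n ↪ α) : ℝ)
      ≤ Real.exp (t * n * ((∑ i, y i) / (Fintype.card α : ℝ))
          + n * (t ^ 2 * (b - a) ^ 2 / 8)) := by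
  intro n
  induction n with
  | zero =>
    intro α _ _ y hy hn
    have : Fintype.card (Fin 0 ↪ α) = 1 := by
      simp [Fintype.card_embedding_eq, Nat.descFactorial]
    rw [this]
    simp
  | succ n ih =>
    intro α instF instD y hy hn
    have hM1 : 1 ≤ Fintype.card α := le_trans (Nat.succ_le_succ (Nat.zero_le n)) hn
    have hne : Nonempty α := Fintype.card_pos_iff.mp hM1
    have hMrpos : (0:ℝ) < (Fintype.card α : ℝ) := by exact_mod_cast hM1
    set K : ℝ := t ^ 2 * (b - a) ^ 2 / 8 with hK
    have hKnn : 0 ≤ K := by rw [hK]; positivity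
    -- cardinality of the subtype
    have hcardsub : ∀ j : α, Fintype.card { i : α // i ≠ j } = Fintype.card α - 1 := by
      intro j
      have := Fintype.card_subtype_compl (fun i : α => i = j)
      simpa [Fintype.card_subtype_eq] using this
    have hcardsubr : ∀ j : α, (Fintype.card { i : α // i ≠ j } : ℝ)
        = (Fintype.card α : ℝ) - 1 := by
      intro j
      rw [hcardsub j, Nat.cast_sub hM1, Nat.cast_one]
    -- cardinality of inner embedding spaces
    set D : ℕ := (Fintype.card α - 1).descFactorial n with hD
    have hDpos : 0 < D := by
      rw [hD]
      apply Nat.pos_of_ne_zero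
      intro h
      have := Nat.descFactorial_eq_zero_iff_lt.mp h
      omega
    have hDr : (0:ℝ) < (D:ℝ) := by exact_mod_cast hDpos
    have hcardinner : ∀ j : α, Fintype.card (Fin n ↪ { i : α // i ≠ j }) = D := by
      intro j
      rw [Fintype.card_embedding_eq, hcardsub j, Fintype.card_fin]
    have hdesc : ∀ k : ℕ, n + 1 ≤ k → k.descFactorial (n+1) = k * ((k-1).descFactorial n) := by
      intro k hk
      obtain ⟨k', rfl⟩ : ∃ k', k = k' + 1 := ⟨k - 1, by omega⟩
      rw [Nat.succ_descFactorial_succ]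
      simp
    have hcardtot : Fintype.card (Fin (n+1) ↪ α) = Fintype.card α * D := by
      rw [Fintype.card_embedding_eq, Fintype.card_fin, hD]
      exact hdesc _ hn
    -- the sum over the subtype population
    have hsumsub : ∀ j : α, (∑ i : { i : α // i ≠ j }, y i.1) = (∑ i, y i) - y j := by
      intro j
      have h1 : (∑ x ∈ Finset.univ.erase j, y x) = ∑ i : { i : α // i ≠ j }, y i.1 := by
        apply Finset.sum_subtype
        intro x
        simp
      rw [← h1, ← Finset.add_sum_erase Finset.univ y (Finset.mem_univ j)]
      ring
    -- decompose the big sum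
    have hdecomp : (∑ σ : Fin (n+1) ↪ α, Real.exp (t * ∑ i, y (σ i)))
        = ∑ j : α, Real.exp (t * y j) *
            ∑ e : Fin n ↪ { i : α // i ≠ j }, Real.exp (t * ∑ k, y (e k).1) := by
      rw [← Equiv.sum_comp (embSuccEquiv n α).symm
        (fun σ => Real.exp (t * ∑ i, y (σ i)))]
      rw [← Finset.univ_sigma_univ, Finset.sum_sigma]
      apply Finset.sum_congr rfl
      intro j _
      rw [Finset.mul_sum]
      apply Finset.sum_congr rfl
      intro e _
      rw [← Real.exp_add]
      congr 1
      have harg : ∑ i : Fin (n+1), y (((embSuccEquiv n α).symm ⟨j, e⟩) i)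
          = y j + ∑ k : Fin n, y (e k).1 := by
        rw [Fin.sum_univ_succ]
        simp [embSuccEquiv, Equiv.symm]
        rfl
      rw [harg]
      ring
    -- abbreviations
    set m : ℝ := (∑ i, y i) / (Fintype.card α : ℝ) with hm
    set z : α → ℝ := fun j => y j
        + n * (((∑ i, y i) - y j) / ((Fintype.card α : ℝ) - 1)) with hz
    set γ : ℝ := 1 - n / ((Fintype.card α : ℝ) - 1) with hγ
    set K2 : ℝ := n * ((∑ i, y i) / ((Fintype.card α : ℝ) - 1)) with hK2
    have hzlin : ∀ j, z j = γ * y j + K2 := by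
      intro j
      rw [hz, hγ, hK2]
      simp only [sub_div]
      ring
    have hγ01 : 0 ≤ γ ∧ γ ≤ 1 := by
      rcases Nat.eq_or_lt_of_le hM1 with h1 | h2
      · have hn0 : n = 0 := by omega
        rw [hγ, hn0]
        norm_num
      · have hpos : (0:ℝ) < (Fintype.card α : ℝ) - 1 := by
          have : (2:ℝ) ≤ (Fintype.card α : ℝ) := by exact_mod_cast h2
          linarith
        have hnle : (n:ℝ) ≤ (Fintype.card α : ℝ) - 1 := by
          have : ((n:ℝ) + 1) ≤ (Fintype.card α : ℝ) := by exact_mod_cast hn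
          linarith
        constructor
        · rw [hγ, sub_nonneg, div_le_one hpos]; exact hnle
        · rw [hγ]
          have : 0 ≤ (n:ℝ) / ((Fintype.card α : ℝ) - 1) := by positivity
          linarith
    -- bounds on z
    have hzmem : ∀ j, z j ∈ Set.Icc (γ * a + K2) (γ * b + K2) := by
      intro j
      rw [hzlin j]
      constructor
      · have := mul_le_mul_of_nonneg_left (hy j).1 hγ01.1
        linarith
      · have := mul_le_mul_of_nonneg_left (hy j).2 hγ01.1
        linarith
    -- mean of z
    have hzmean : (∑ j, z j) / (Fintype.card α : ℝ) = ((n:ℝ) + 1) * m := by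
      have hsz : (∑ j, z j) = γ * (∑ i, y i) + (Fintype.card α : ℝ) * K2 := by
        calc (∑ j, z j) = ∑ j, (γ * y j + K2) := Finset.sum_congr rfl fun j _ => hzlin j
          _ = γ * (∑ i, y i) + (Fintype.card α : ℝ) * K2 := by
              rw [Finset.sum_add_distrib, ← Finset.mul_sum, Finset.sum_const,
                Finset.card_univ, nsmul_eq_mul]
      rw [hsz, hm]
      rcases Nat.eq_or_lt_of_le hM1 with h1 | h2
      · have hn0 : n = 0 := by omega
        have hM0 : (Fintype.card α : ℝ) = 1 := by rw [← h1]; norm_num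
        rw [hγ, hK2, hn0, hM0]
        norm_num
      · have hpos : ((Fintype.card α : ℝ) - 1) ≠ 0 := by
          have h2' : (2:ℝ) ≤ (Fintype.card α : ℝ) := by exact_mod_cast h2
          intro h
          rw [sub_eq_zero] at h
          rw [h] at h2'
          linarith
        rw [hγ, hK2]
        field_simp
        ring
    -- apply Hoeffding's lemma to z
    have hhoef := hoeffding_finite (a := γ * a + K2) (b := γ * b + K2) z hzmem t
    have hhoef2 : (∑ j, Real.exp (t * z j)) / (Fintype.card α : ℝ)
        ≤ Real.exp (t * (((n:ℝ) + 1) * m) + K) := by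
      refine hhoef.trans (Real.exp_le_exp.mpr ?_)
      rw [hzmean]
      have e2 : t ^ 2 * ((γ * b + K2) - (γ * a + K2)) ^ 2 / 8 ≤ K := by
        have e1 : (γ * b + K2) - (γ * a + K2) = γ * (b - a) := by ring
        rw [e1, hK]
        have hg2 : γ ^ 2 ≤ 1 := by nlinarith [hγ01.1, hγ01.2]
        have hsq : (γ * (b - a)) ^ 2 ≤ (b - a) ^ 2 := by
          rw [mul_pow]
          have := mul_le_mul_of_nonneg_right hg2 (sq_nonneg (b - a))
          simpa using this
        gcongr
      linarith
    -- the inner bound from the induction hypothesis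
    have hIH : ∀ j : α, (∑ e : Fin n ↪ { i : α // i ≠ j }, Real.exp (t * ∑ k, y (e k).1))
        ≤ (D:ℝ) * Real.exp (t * n * (((∑ i, y i) - y j) / ((Fintype.card α : ℝ) - 1))
            + n * K) := by
      intro j
      have hsub : n ≤ Fintype.card { i : α // i ≠ j } := by rw [hcardsub j]; omega
      have hh := ih (fun i : { i : α // i ≠ j } => y i.1) (fun i => hy i.1) hsub
      rw [hcardinner j, hsumsub j, hcardsubr j, div_le_iff₀ hDr] at hh
      calc (∑ e : Fin n ↪ { i : α // i ≠ j }, Real.exp (t * ∑ k, y (e k).1))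
          ≤ Real.exp (t * n * (((∑ i, y i) - y j) / ((Fintype.card α : ℝ) - 1)) + n * K)
            * (D:ℝ) := hh
        _ = _ := by ring
    -- put everything together
    calc (∑ σ : Fin (n+1) ↪ α, Real.exp (t * ∑ i, y (σ i)))
            / (Fintype.card (Fin (n+1) ↪ α) : ℝ)
        = (∑ j : α, Real.exp (t * y j) *
            ∑ e : Fin n ↪ { i : α // i ≠ j }, Real.exp (t * ∑ k, y (e k).1))
            / ((Fintype.card α : ℝ) * (D:ℝ)) := by
          rw [hdecomp, hcardtot, Nat.cast_mul]
      _ ≤ (∑ j : α, Real.exp (t * y j) *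
            ((D:ℝ) * Real.exp (t * n * (((∑ i, y i) - y j) / ((Fintype.card α : ℝ) - 1))
              + n * K)))
            / ((Fintype.card α : ℝ) * (D:ℝ)) := by
          apply div_le_div_of_nonneg_right ?_ (by positivity)
          apply Finset.sum_le_sum
          intro j _
          exact mul_le_mul_of_nonneg_left (hIH j) (Real.exp_pos _).le
      _ = (∑ j : α, Real.exp (t * z j)) / (Fintype.card α : ℝ) * Real.exp (n * K) := by
          have hterm : ∀ j : α, Real.exp (t * y j) *
              ((D:ℝ) * Real.exp (t * n * (((∑ i, y i) - y j) / ((Fintype.card α : ℝ) - 1))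
                + n * K))
              = (D:ℝ) * (Real.exp (t * z j) * Real.exp ((n:ℝ) * K)) := by
            intro j
            have hx : Real.exp (t * y j)
                * Real.exp (t * n * (((∑ i, y i) - y j) / ((Fintype.card α : ℝ) - 1)) + n * K)
                = Real.exp (t * z j) * Real.exp ((n:ℝ) * K) := by
              rw [← Real.exp_add, ← Real.exp_add]
              congr 1
              rw [hz]
              ring
            calc Real.exp (t * y j) * ((D:ℝ) * Real.exp (t * n * (((∑ i, y i) - y j)
                  / ((Fintype.card α : ℝ) - 1)) + n * K))
                = (D:ℝ) * (Real.exp (t * y j) * Real.exp (t * n * (((∑ i, y i) - y j)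
                  / ((Fintype.card α : ℝ) - 1)) + n * K)) := by ring
              _ = (D:ℝ) * (Real.exp (t * z j) * Real.exp ((n:ℝ) * K)) := by rw [hx]
          rw [Finset.sum_congr rfl (fun j _ => hterm j)]
          rw [← Finset.mul_sum, ← Finset.sum_mul]
          field_simp
      _ ≤ Real.exp (t * (((n:ℝ) + 1) * m) + K) * Real.exp (n * K) :=
          mul_le_mul_of_nonneg_right hhoef2 (Real.exp_pos _).le
      _ = Real.exp (t * ((n+1 : ℕ) : ℝ) * m + ((n+1 : ℕ) : ℝ) * K) := by
          rw [← Real.exp_add]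
          congr 1
          push_cast
          ring

lemma tail_upper {α : Type} [Fintype α] [DecidableEq α] (a b : ℝ) (hab : a < b)
    (n : ℕ) (hnM : n ≤ Fintype.card α)
    (y : α → ℝ) (hy : ∀ i, y i ∈ Set.Icc a b) (ε : ℝ) (hε : 0 < ε) :
    ((Finset.univ.filter (fun σ : Fin n ↪ α =>
        (∑ i, y (σ i)) ≥ n * ((∑ i, y i) / (Fintype.card α : ℝ) + ε))).card : ℝ)
      / (Fintype.card (Fin n ↪ α) : ℝ)
      ≤ Real.exp (-2 * n * ε ^ 2 / (b - a) ^ 2) := by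
  have hc : (0:ℝ) < b - a := by linarith
  set c : ℝ := b - a with hcdef
  set t : ℝ := 4 * ε / c ^ 2 with ht
  have htpos : 0 < t := by rw [ht]; positivity
  set m : ℝ := (∑ i, y i) / (Fintype.card α : ℝ) with hm
  have hDpos : (0:ℝ) < (Fintype.card (Fin n ↪ α) : ℝ) := by
    have : 0 < Fintype.card (Fin n ↪ α) := by
      rw [Fintype.card_embedding_eq, Fintype.card_fin]
      apply Nat.pos_of_ne_zero
      intro h
      have := Nat.descFactorial_eq_zero_iff_lt.mp h
      omega
    exact_mod_cast this
  set F : Finset (Fin n ↪ α) := Finset.univ.filter (fun σ : Fin n ↪ α =>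
      (∑ i, y (σ i)) ≥ n * (m + ε)) with hF
  -- step 1: indicator bound
  have step1 : (F.card : ℝ) ≤ ∑ σ ∈ F, Real.exp (t * (∑ i, y (σ i)) - t * (n * (m + ε))) := by
    rw [Finset.card_eq_sum_ones F]
    push_cast
    apply Finset.sum_le_sum
    intro σ hσ
    have hσ' : (∑ i, y (σ i)) ≥ n * (m + ε) := (Finset.mem_filter.mp hσ).2
    calc (1:ℝ) = Real.exp 0 := Real.exp_zero.symm
      _ ≤ _ := by
          apply Real.exp_le_exp.2
          have := mul_le_mul_of_nonneg_left hσ' htpos.le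
          linarith
  have step2 : (∑ σ ∈ F, Real.exp (t * (∑ i, y (σ i)) - t * (n * (m + ε))))
      ≤ ∑ σ : Fin n ↪ α, Real.exp (t * (∑ i, y (σ i)) - t * (n * (m + ε))) :=
    Finset.sum_le_sum_of_subset_of_nonneg (Finset.subset_univ F)
      (fun σ _ _ => (Real.exp_pos _).le)
  have step3 : (∑ σ : Fin n ↪ α, Real.exp (t * (∑ i, y (σ i)) - t * (n * (m + ε))))
      = (∑ σ : Fin n ↪ α, Real.exp (t * (∑ i, y (σ i)))) * Real.exp (- (t * (n * (m + ε)))) := by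
    calc (∑ σ : Fin n ↪ α, Real.exp (t * (∑ i, y (σ i)) - t * (n * (m + ε))))
        = ∑ σ : Fin n ↪ α, Real.exp (t * (∑ i, y (σ i))) * Real.exp (- (t * (n * (m + ε)))) :=
          Finset.sum_congr rfl fun σ _ => by rw [← Real.exp_add, sub_eq_add_neg]
      _ = _ := by rw [← Finset.sum_mul]
  have hmgf := mgf_bound a b hab.le t n y hy hnM
  calc (F.card : ℝ) / (Fintype.card (Fin n ↪ α) : ℝ)
      ≤ ((∑ σ : Fin n ↪ α, Real.exp (t * (∑ i, y (σ i)))) * Real.exp (- (t * (n * (m + ε)))))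
          / (Fintype.card (Fin n ↪ α) : ℝ) := by
        apply div_le_div_of_nonneg_right ?_ hDpos.le
        exact le_trans step1 (le_trans step2 (le_of_eq step3))
    _ = ((∑ σ : Fin n ↪ α, Real.exp (t * (∑ i, y (σ i))))
          / (Fintype.card (Fin n ↪ α) : ℝ)) * Real.exp (- (t * (n * (m + ε)))) := by
        ring
    _ ≤ Real.exp (t * n * m + n * (t ^ 2 * c ^ 2 / 8)) * Real.exp (- (t * (n * (m + ε)))) :=
        mul_le_mul_of_nonneg_right hmgf (Real.exp_pos _).le
    _ = Real.exp (-2 * n * ε ^ 2 / c ^ 2) := by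
        rw [← Real.exp_add]
        congr 1
        rw [ht]
        field_simp
        ring

theorem hoeffding_sampling_without_replacement_two_sided'
    (a b : ℝ) (hab : a < b)
    (N n : ℕ) (hn : 1 ≤ n) (hnN : n ≤ N)
    (x : Fin N → ℝ) (hx : ∀ i, x i ∈ Set.Icc a b)
    (μ : ℝ) (hμ : μ = (1 / N : ℝ) * ∑ i, x i)
    (ε : ℝ) (hε : 0 < ε) :
    ((Finset.univ.filter (fun σ : Fin n ↪ Fin N =>
        |(1 / n : ℝ) * ∑ i, x (σ i) - μ| ≥ ε)).card : ℝ)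
      / (Fintype.card (Fin n ↪ Fin N) : ℝ)
      ≤ 2 * Real.exp (-2 * n * ε ^ 2 / (b - a) ^ 2) := by
  have hNn : (0:ℝ) < (n:ℝ) := by exact_mod_cast hn
  have hcard : Fintype.card (Fin N) = N := Fintype.card_fin N
  have hnM : n ≤ Fintype.card (Fin N) := by rw [hcard]; exact hnN
  have hA := tail_upper a b hab n hnM x hx ε hε
  have hB := tail_upper (-b) (-a) (by linarith) n hnM (fun i => -(x i))
      (fun i => ⟨neg_le_neg (hx i).2, neg_le_neg (hx i).1⟩) ε hε
  rw [show ((-a) - (-b)) = b - a from by ring] at hB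
  have hDpos : (0:ℝ) < (Fintype.card (Fin n ↪ Fin N) : ℝ) := by
    have : 0 < Fintype.card (Fin n ↪ Fin N) := by
      rw [Fintype.card_embedding_eq, Fintype.card_fin, Fintype.card_fin]
      apply Nat.pos_of_ne_zero
      intro h
      have := Nat.descFactorial_eq_zero_iff_lt.mp h
      omega
    exact_mod_cast this
  set A : Finset (Fin n ↪ Fin N) := Finset.univ.filter (fun σ : Fin n ↪ Fin N =>
      (∑ i, x (σ i)) ≥ n * ((∑ i, x i) / (Fintype.card (Fin N) : ℝ) + ε)) with hAdef
  set B : Finset (Fin n ↪ Fin N) := Finset.univ.filter (fun σ : Fin n ↪ Fin N =>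
      (∑ i, -(x (σ i))) ≥ n * ((∑ i, -(x i)) / (Fintype.card (Fin N) : ℝ) + ε)) with hBdef
  have hμ' : (∑ i, x i) / (Fintype.card (Fin N) : ℝ) = μ := by
    rw [hμ, hcard]; ring
  have hsub : (Finset.univ.filter (fun σ : Fin n ↪ Fin N =>
      |(1 / n : ℝ) * ∑ i, x (σ i) - μ| ≥ ε)) ⊆ A ∪ B := by
    intro σ hσ
    rw [Finset.mem_filter] at hσ
    have hinv : (n:ℝ) * ((1 / n : ℝ) * ∑ i, x (σ i)) = ∑ i, x (σ i) := by
      field_simp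
    rcases le_abs.mp hσ.2 with h1 | h2
    · apply Finset.mem_union_left
      rw [hAdef, Finset.mem_filter]
      refine ⟨Finset.mem_univ _, ?_⟩
      rw [hμ']
      have h3 := mul_le_mul_of_nonneg_left h1 hNn.le
      rw [mul_sub, hinv] at h3
      linarith
    · apply Finset.mem_union_right
      rw [hBdef, Finset.mem_filter]
      refine ⟨Finset.mem_univ _, ?_⟩
      have e1 : (∑ i, -(x (σ i))) = -(∑ i, x (σ i)) := by
        rw [Finset.sum_neg_distrib]
      have e2 : (∑ i : Fin N, -(x i)) = -(∑ i, x i) := by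
        rw [Finset.sum_neg_distrib]
      rw [e1, e2, neg_div, hμ']
      have h3 := mul_le_mul_of_nonneg_left h2 hNn.le
      rw [neg_sub, mul_sub, hinv] at h3
      linarith
  calc ((Finset.univ.filter (fun σ : Fin n ↪ Fin N =>
        |(1 / n : ℝ) * ∑ i, x (σ i) - μ| ≥ ε)).card : ℝ)
          / (Fintype.card (Fin n ↪ Fin N) : ℝ)
      ≤ ((A ∪ B).card : ℝ) / (Fintype.card (Fin n ↪ Fin N) : ℝ) := by
        apply div_le_div_of_nonneg_right ?_ hDpos.le
        exact_mod_cast Finset.card_le_card hsub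
    _ ≤ ((A.card : ℝ) + (B.card : ℝ)) / (Fintype.card (Fin n ↪ Fin N) : ℝ) := by
        apply div_le_div_of_nonneg_right ?_ hDpos.le
        exact_mod_cast Finset.card_union_le A B
    _ = (A.card : ℝ) / (Fintype.card (Fin n ↪ Fin N) : ℝ)
          + (B.card : ℝ) / (Fintype.card (Fin n ↪ Fin N) : ℝ) := by
        rw [add_div]
    _ ≤ 2 * Real.exp (-2 * n * ε ^ 2 / (b - a) ^ 2) := by
        have := add_le_add hA hB
        rw [two_mul]
        exact le_trans (by exact le_of_eq rfl) (le_trans this (le_of_eq (by ring)))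


/-- **Hoeffding's inequality for sampling without replacement** (two-sided, population in
`[a,b]`). The population is `x : Fin N → ℝ`; a uniformly random sample of size `n` without
replacement corresponds to a uniformly random injection `σ : Fin n ↪ Fin N`, the `i`-th sample
being `x (σ i)`. The probability of an event is the fraction of injections realizing it. -/
theorem hoeffding_sampling_without_replacement_two_sided
    (a b : ℝ) (hab : a < b)
    (N n : ℕ) (hn : 1 ≤ n) (hnN : n ≤ N)
    (x : Fin N → ℝ) (hx : ∀ i, x i ∈ Set.Icc a b)
    (μ : ℝ) (hμ : μ = (1 / N : ℝ) * ∑ i, x i)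
    (ε : ℝ) (hε : 0 < ε) :
    ((Finset.univ.filter (fun σ : Fin n ↪ Fin N =>
        |(1 / n : ℝ) * ∑ i, x (σ i) - μ| ≥ ε)).card : ℝ)
      / (Fintype.card (Fin n ↪ Fin N) : ℝ)
      ≤ 2 * Real.exp (-2 * n * ε ^ 2 / (b - a) ^ 2) :=
  hoeffding_sampling_without_replacement_two_sided' a b hab N n hn hnN x hx μ hμ ε hε
end

section
/- Let Δ > 0, δ ∈ (0,1), and let K ≥ 2 be an integer indexing a set of K actions. For each action a ∈ {1,…,K} let ℓ_{a,1}, …, ℓ_{a,M} be fixed (deterministic) losses in [0,1], and suppose there is a distinguished action a* such that for every action a ≠ a*, (1/M)∑_{t=1}^M (ℓ_{a,t} − ℓ_{a*,t}) > 4Δ. For each action a, let Z_a be a uniformly random subset of {1,…,M} of size n, with the subsets Z_1, …, Z_K mutually independent, where n ≤ M and n ≥ (1/(8Δ²)) · ln(2K/δ). Then with probability at least 1 − δ, the empirical mean (1/n)∑_{t∈Z_{a*}} ℓ_{a*,t} is strictly smaller than (1/n)∑_{t∈Z_a} ℓ_{a,t} for every action a ≠ a*, i.e., the action with the minimum empirical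 mean loss over the loss-monitoring samples is a*. -/
open scoped Classical
open Finset

lemma hoeffding_core (p : ℝ) (hp0 : 0 ≤ p) (hp1 : p ≤ 1) (h : ℝ) (hh : 0 ≤ h) :
    1 - p + p * Real.exp h ≤ Real.exp (h * p + h ^ 2 / 8) := by
  set g : ℝ → ℝ := fun x => 1 - p + p * Real.exp x with hg
  have gpos : ∀ x, 0 < g x := by
    intro x
    rcases lt_or_eq_of_le hp1 with h1 | h1
    · have : 0 ≤ p * Real.exp x := mul_nonneg hp0 (Real.exp_pos x).le
      simp only [hg]; linarith
    · simp only [hg]; rw [← h1]; nlinarith [Real.exp_pos x]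
  have hgd : ∀ x, HasDerivAt g (p * Real.exp x) x := by
    intro x
    exact ((Real.hasDerivAt_exp x).const_mul p).const_add (1 - p)
  set φ : ℝ → ℝ := fun x => p + x / 4 - p * Real.exp x / g x with hφ
  have hφd : ∀ x, HasDerivAt φ
      (1 / 4 - p * Real.exp x * (1 - p) / (g x) ^ 2) x := by
    intro x
    have h1 : HasDerivAt (fun x => p * Real.exp x) (p * Real.exp x) x :=
      (Real.hasDerivAt_exp x).const_mul p
    have h2 : HasDerivAt (fun x => p * Real.exp x / g x)
        ((p * Real.exp x * g x - p * Real.exp x * (p * Real.exp x)) / (g x) ^ 2) x :=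
      h1.div (hgd x) (gpos x).ne'
    have h3 : HasDerivAt (fun x => p + x / 4) (1 / 4) x := by
      simpa using ((hasDerivAt_id x).div_const 4).const_add p
    have := h3.sub h2
    refine this.congr_deriv ?_
    have hne : g x ≠ 0 := (gpos x).ne'
    rw [show g x = 1 - p + p * Real.exp x from rfl]
    ring
  have hψ : ∀ x, 0 ≤ 1 / 4 - p * Real.exp x * (1 - p) / (g x) ^ 2 := by
    intro x
    rw [sub_nonneg, div_le_iff₀ (pow_pos (gpos x) 2)]
    have h1 : 0 ≤ p * Real.exp x := mul_nonneg hp0 (Real.exp_pos x).le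
    have h2 : g x = (1 - p) + p * Real.exp x := by simp [hg]
    nlinarith [sq_nonneg ((1 - p) - p * Real.exp x)]
  have hφmono : MonotoneOn φ (Set.Ici (0:ℝ)) := by
    apply monotoneOn_of_deriv_nonneg (convex_Ici 0)
    · exact fun x _ => ((hφd x).differentiableAt).continuousAt.continuousWithinAt
    · exact fun x _ => ((hφd x).differentiableAt).differentiableWithinAt
    · intro x _
      rw [(hφd x).deriv]
      exact hψ x
  have hφ0 : φ 0 = 0 := by
    have : g 0 = 1 := by simp [hg]
    simp [hφ, this]
  have hφnonneg : ∀ x ∈ Set.Ici (0:ℝ), 0 ≤ φ x := by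
    intro x hx
    rw [← hφ0]
    exact hφmono (by simp) hx hx
  set F : ℝ → ℝ := fun x => x * p + x ^ 2 / 8 - Real.log (g x) with hF
  have hFd : ∀ x, HasDerivAt F (φ x) x := by
    intro x
    have h1 : HasDerivAt (fun x => Real.log (g x)) (p * Real.exp x / g x) x :=
      (hgd x).log (gpos x).ne'
    have h2 : HasDerivAt (fun x : ℝ => x * p + x ^ 2 / 8) (p + x / 4) x := by
      have := ((hasDerivAt_id x).mul_const p).add ((hasDerivAt_pow 2 x).div_const 8)
      refine this.congr_deriv ?_
      ring
    exact h2.sub h1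
  have hFmono : MonotoneOn F (Set.Ici (0:ℝ)) := by
    apply monotoneOn_of_deriv_nonneg (convex_Ici 0)
    · exact fun x _ => ((hFd x).differentiableAt).continuousAt.continuousWithinAt
    · exact fun x _ => ((hFd x).differentiableAt).differentiableWithinAt
    · intro x hx
      rw [(hFd x).deriv]
      exact hφnonneg x (le_of_lt (by simpa using hx))
  have hF0 : F 0 = 0 := by
    have : g 0 = 1 := by simp [hg]
    simp [hF, this]
  have hFh : 0 ≤ F h := by
    rw [← hF0]
    exact hFmono (by simp) (by simpa using hh) hh
  have hlog : Real.log (g h) ≤ h * p + h ^ 2 / 8 := by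
    simp only [hF] at hFh; linarith
  calc 1 - p + p * Real.exp h = g h := by simp [hg]
    _ = Real.exp (Real.log (g h)) := (Real.exp_log (gpos h)).symm
    _ ≤ Real.exp (h * p + h ^ 2 / 8) := Real.exp_le_exp.2 hlog

lemma sum_exp_le {ι : Type*} (R : Finset ι) (hR : R.Nonempty) (x : ι → ℝ)
    (hx : ∀ t ∈ R, x t ∈ Set.Icc (0:ℝ) 1) (h : ℝ) (hh : 0 ≤ h) :
    ∑ t ∈ R, Real.exp (h * x t) ≤
      R.card * Real.exp (h * ((∑ t ∈ R, x t) / R.card) + h ^ 2 / 8) := by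
  have hr : (0:ℝ) < R.card := by exact_mod_cast Finset.card_pos.2 hR
  set S := ∑ t ∈ R, x t with hS
  have hS0 : 0 ≤ S := Finset.sum_nonneg fun t ht => (hx t ht).1
  have hS1 : S ≤ R.card := by
    calc S ≤ ∑ _t ∈ R, (1:ℝ) := Finset.sum_le_sum fun t ht => (hx t ht).2
    _ = R.card := by simp
  have hp0 : 0 ≤ S / R.card := div_nonneg hS0 hr.le
  have hp1 : S / R.card ≤ 1 := (div_le_one hr).2 hS1
  have step : ∀ t ∈ R, Real.exp (h * x t) ≤ (1 - x t) + x t * Real.exp h := by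
    intro t ht
    have hx0 := (hx t ht).1
    have hx1 := (hx t ht).2
    have := convexOn_exp.2 (Set.mem_univ (0:ℝ)) (Set.mem_univ h)
      (by linarith : (0:ℝ) ≤ 1 - x t) hx0 (by ring)
    simp only [smul_eq_mul, mul_zero, zero_add, Real.exp_zero, mul_one] at this
    calc Real.exp (h * x t) = Real.exp (x t * h) := by rw [mul_comm]
    _ ≤ (1 - x t) + x t * Real.exp h := by simpa using this
  calc ∑ t ∈ R, Real.exp (h * x t) ≤ ∑ t ∈ R, ((1 - x t) + x t * Real.exp h) :=
        Finset.sum_le_sum step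
    _ = R.card * (1 - S / R.card + (S / R.card) * Real.exp h) := by
        rw [Finset.sum_add_distrib, Finset.sum_sub_distrib, ← Finset.sum_mul]
        simp only [← hS]
        field_simp
        simp
    _ ≤ R.card * Real.exp (h * (S / R.card) + h ^ 2 / 8) := by
        apply mul_le_mul_of_nonneg_left (hoeffding_core _ hp0 hp1 h hh) hr.le

lemma sum_powersetCard_succ {α : Type*} [DecidableEq α] (R : Finset α) (m : ℕ)
    (F : Finset α → ℝ) :
    ((m:ℝ)+1) * ∑ s ∈ R.powersetCard (m+1), F s
      = ∑ t ∈ R, ∑ s ∈ (R.erase t).powersetCard m, F (insert t s) := by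
  have key : ∑ s ∈ R.powersetCard (m+1), ∑ t ∈ s, F s
      = ∑ t ∈ R, ∑ s ∈ (R.erase t).powersetCard m, F (insert t s) := by
    rw [Finset.sum_sigma', Finset.sum_sigma']
    refine Finset.sum_bij' (fun x _ => ⟨x.2, x.1.erase x.2⟩)
      (fun x _ => ⟨insert x.1 x.2, x.1⟩) ?_ ?_ ?_ ?_ ?_
    · rintro ⟨s, t⟩ hst
      simp only [Finset.mem_sigma, Finset.mem_powersetCard] at hst ⊢
      obtain ⟨⟨hsub, hcard⟩, ht⟩ := hst
      exact ⟨hsub ht, Finset.erase_subset_erase _ hsub,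
        by rw [Finset.card_erase_of_mem ht, hcard]; rfl⟩
    · rintro ⟨t, s⟩ hts
      simp only [Finset.mem_sigma, Finset.mem_powersetCard] at hts ⊢
      obtain ⟨ht, hsub, hcard⟩ := hts
      have hts' : t ∉ s := fun hc => (Finset.mem_erase.1 (hsub hc)).1 rfl
      refine ⟨⟨?_, ?_⟩, Finset.mem_insert_self _ _⟩
      · exact Finset.insert_subset ht (hsub.trans (Finset.erase_subset _ _))
      · rw [Finset.card_insert_of_notMem hts', hcard]
    · rintro ⟨s, t⟩ hst
      simp only [Finset.mem_sigma, Finset.mem_powersetCard] at hst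
      have := Finset.insert_erase hst.2
      simp [this]
    · rintro ⟨t, s⟩ hts
      simp only [Finset.mem_sigma, Finset.mem_powersetCard] at hts
      have hts' : t ∉ s := fun hc => (Finset.mem_erase.1 (hts.2.1 hc)).1 rfl
      simp [Finset.erase_insert hts']
    · rintro ⟨s, t⟩ hst
      simp only [Finset.mem_sigma, Finset.mem_powersetCard] at hst
      rw [Finset.insert_erase hst.2]
  rw [← key, Finset.mul_sum]
  apply Finset.sum_congr rfl
  intro s hs
  rw [Finset.mem_powersetCard] at hs
  rw [Finset.sum_const, hs.2]
  push_cast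
  ring

lemma mgf_powersetCard {α : Type*} [DecidableEq α] (f : α → ℝ)
    (hf : ∀ t, f t ∈ Set.Icc (0:ℝ) 1) (lam : ℝ) (hlam : 0 ≤ lam) :
    ∀ (m : ℕ) (R : Finset α), m ≤ R.card →
    ∑ s ∈ R.powersetCard m, Real.exp (lam * ∑ t ∈ s, f t)
      ≤ (R.card.choose m) *
        Real.exp (lam * m * ((∑ t ∈ R, f t) / R.card) + m * lam ^ 2 / 8) := by
  intro m
  induction m with
  | zero =>
      intro R _
      simp
  | succ m ih =>
      intro R hmR
      rcases Nat.lt_or_ge R.card 2 with hr2 | hr2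
      · -- R.card = 1, m = 0
        have hr1 : R.card = 1 := by omega
        have hm0 : m = 0 := by omega
        subst hm0
        rw [show (0:ℕ)+1 = R.card from hr1.symm, Finset.powersetCard_self,
          Finset.sum_singleton, hr1]
        have hpos : (0:ℝ) ≤ lam ^ 2 / 8 := by positivity
        simp only [Nat.choose_self, Nat.cast_one, one_mul, div_one]
        exact Real.exp_le_exp.2 (by nlinarith)
      · -- main case: 2 ≤ R.card
        set rr : ℝ := (R.card : ℝ) with hrr
        have hrr2 : (2:ℝ) ≤ rr := by rw [hrr]; exact_mod_cast hr2
        have hsupos : (0:ℝ) < rr - 1 := by linarith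
        set T := ∑ t ∈ R, f t with hT
        have hmsu : (m:ℝ) ≤ rr - 1 := by
          have : (m:ℝ) + 1 ≤ rr := by rw [hrr]; exact_mod_cast hmR
          linarith
        have key := sum_powersetCard_succ R m (fun s => Real.exp (lam * ∑ t ∈ s, f t))
        have hcast : ((R.card - 1 : ℕ) : ℝ) = rr - 1 := by
          rw [Nat.cast_sub (by omega : 1 ≤ R.card)]; push_cast [hrr]; ring
        have hbound : ∀ t ∈ R, ∑ s ∈ (R.erase t).powersetCard m,
            Real.exp (lam * ∑ u ∈ insert t s, f u)
            ≤ ((R.card - 1).choose m : ℝ) * Real.exp (m * lam ^ 2 / 8) *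
              Real.exp (lam * f t + lam * m * ((T - f t) / (rr - 1))) := by
          intro t ht
          have hcarde : (R.erase t).card = R.card - 1 := Finset.card_erase_of_mem ht
          have hTe : ∑ u ∈ R.erase t, f u = T - f t := Finset.sum_erase_eq_sub ht
          have hIH := ih (R.erase t) (by rw [hcarde]; omega)
          rw [hcarde, hTe, hcast] at hIH
          have hsplit : ∀ s ∈ (R.erase t).powersetCard m,
              Real.exp (lam * ∑ u ∈ insert t s, f u)
                = Real.exp (lam * f t) * Real.exp (lam * ∑ u ∈ s, f u) := by
            intro s hs
            rw [Finset.mem_powersetCard] at hs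
            have hts : t ∉ s := fun hc => (Finset.mem_erase.1 (hs.1 hc)).1 rfl
            rw [Finset.sum_insert hts, mul_add, Real.exp_add]
          rw [Finset.sum_congr rfl hsplit, ← Finset.mul_sum]
          calc Real.exp (lam * f t) *
              ∑ s ∈ (R.erase t).powersetCard m, Real.exp (lam * ∑ u ∈ s, f u)
              ≤ Real.exp (lam * f t) * (((R.card - 1).choose m : ℝ) *
                 Real.exp (lam * m * ((T - f t) / (rr - 1)) + m * lam ^ 2 / 8)) :=
                mul_le_mul_of_nonneg_left hIH (Real.exp_nonneg _)
            _ = ((R.card - 1).choose m : ℝ) * Real.exp (m * lam ^ 2 / 8) *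
                 Real.exp (lam * f t + lam * m * ((T - f t) / (rr - 1))) := by
                simp only [Real.exp_add]
                ring
        have step1 : ((m:ℝ)+1) * ∑ s ∈ R.powersetCard (m+1), Real.exp (lam * ∑ t ∈ s, f t)
            ≤ ((R.card - 1).choose m : ℝ) * Real.exp (m * lam ^ 2 / 8) *
              ∑ t ∈ R, Real.exp (lam * f t + lam * m * ((T - f t) / (rr - 1))) := by
          rw [key, Finset.mul_sum]
          exact Finset.sum_le_sum hbound
        set h0 : ℝ := lam * ((rr - 1 - m) / (rr - 1)) with hh0
        have hc01 : (rr - 1 - m) / (rr - 1) ≤ 1 := by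
          rw [div_le_one hsupos]; linarith
        have hc00 : 0 ≤ (rr - 1 - m) / (rr - 1) := div_nonneg (by linarith) hsupos.le
        have hh0nn : 0 ≤ h0 := mul_nonneg hlam hc00
        have hh0lam : h0 ≤ lam := by
          calc h0 ≤ lam * 1 := mul_le_mul_of_nonneg_left hc01 hlam
          _ = lam := mul_one lam
        have hsum2 : ∑ t ∈ R, Real.exp (lam * f t + lam * m * ((T - f t) / (rr - 1)))
            = Real.exp (lam * m * T / (rr - 1)) * ∑ t ∈ R, Real.exp (h0 * f t) := by
          rw [Finset.mul_sum]
          apply Finset.sum_congr rfl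
          intro t _
          rw [← Real.exp_add]
          congr 1
          rw [hh0]
          field_simp
          ring
        have hRne : R.Nonempty := Finset.card_pos.1 (by omega)
        have hse := sum_exp_le R hRne f (fun t _ => hf t) h0 hh0nn
        rw [← hrr, ← hT] at hse
        have hexp2 : Real.exp (h0 * (T / rr) + h0 ^ 2 / 8)
            ≤ Real.exp (h0 * (T / rr) + lam ^ 2 / 8) := by
          apply Real.exp_le_exp.2
          nlinarith
        have hse2 : ∑ t ∈ R, Real.exp (h0 * f t)
            ≤ rr * Real.exp (h0 * (T / rr) + lam ^ 2 / 8) := by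
          calc ∑ t ∈ R, Real.exp (h0 * f t)
              ≤ rr * Real.exp (h0 * (T / rr) + h0 ^ 2 / 8) := hse
            _ ≤ rr * Real.exp (h0 * (T / rr) + lam ^ 2 / 8) := by
                apply mul_le_mul_of_nonneg_left hexp2 (by linarith)
        have hexpo3 : lam * m * T / (rr - 1) + (h0 * (T / rr) + lam ^ 2 / 8)
            = lam * (m + 1) * (T / rr) + lam ^ 2 / 8 := by
          rw [hh0]
          field_simp
          ring
        have hchoose : ((m:ℝ) + 1) * (R.card.choose (m+1) : ℝ)
            = rr * ((R.card - 1).choose m : ℝ) := by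
          have h1 := Nat.add_one_mul_choose_eq (R.card - 1) m
          rw [show R.card - 1 + 1 = R.card by omega] at h1
          have h2 : (m + 1) * (R.card.choose (m+1)) = R.card * ((R.card - 1).choose m) :=
            (mul_comm _ _).trans h1.symm
          rw [hrr]
          exact_mod_cast h2
        have main : ((m:ℝ)+1) * ∑ s ∈ R.powersetCard (m+1), Real.exp (lam * ∑ t ∈ s, f t)
            ≤ ((m:ℝ)+1) * ((R.card.choose (m+1) : ℝ) *
              Real.exp (lam * (m+1) * (T / rr) + (m+1) * lam ^ 2 / 8)) := by
          calc ((m:ℝ)+1) * ∑ s ∈ R.powersetCard (m+1), Real.exp (lam * ∑ t ∈ s, f t)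
              ≤ ((R.card - 1).choose m : ℝ) * Real.exp (m * lam ^ 2 / 8) *
                (Real.exp (lam * m * T / (rr - 1)) * ∑ t ∈ R, Real.exp (h0 * f t)) := by
                rw [← hsum2]; exact step1
            _ ≤ ((R.card - 1).choose m : ℝ) * Real.exp (m * lam ^ 2 / 8) *
                (Real.exp (lam * m * T / (rr - 1)) *
                  (rr * Real.exp (h0 * (T / rr) + lam ^ 2 / 8))) := by
                apply mul_le_mul_of_nonneg_left _ (by positivity)
                exact mul_le_mul_of_nonneg_left hse2 (Real.exp_nonneg _)
            _ = ((m:ℝ)+1) * ((R.card.choose (m+1) : ℝ) *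
                Real.exp (lam * ((m:ℝ)+1) * (T / rr) + ((m:ℝ)+1) * lam ^ 2 / 8)) := by
                have e1 : Real.exp (lam * (m:ℝ) * T / (rr - 1)) *
                    Real.exp (h0 * (T / rr) + lam ^ 2 / 8)
                    = Real.exp (lam * ((m:ℝ)+1) * (T / rr) + lam ^ 2 / 8) := by
                  rw [← Real.exp_add, hexpo3]
                have e2 : Real.exp (lam * ((m:ℝ)+1) * (T / rr) + ((m:ℝ)+1) * lam ^ 2 / 8)
                    = Real.exp (lam * ((m:ℝ)+1) * (T / rr) + lam ^ 2 / 8) *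
                      Real.exp ((m:ℝ) * lam ^ 2 / 8) := by
                  rw [← Real.exp_add]; ring_nf
                rw [e2]
                calc ((R.card - 1).choose m : ℝ) * Real.exp ((m:ℝ) * lam ^ 2 / 8) *
                    (Real.exp (lam * (m:ℝ) * T / (rr - 1)) *
                      (rr * Real.exp (h0 * (T / rr) + lam ^ 2 / 8)))
                    = (rr * ((R.card - 1).choose m : ℝ)) *
                      ((Real.exp (lam * (m:ℝ) * T / (rr - 1)) *
                        Real.exp (h0 * (T / rr) + lam ^ 2 / 8)) *
                        Real.exp ((m:ℝ) * lam ^ 2 / 8)) := by ring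
                  _ = (((m:ℝ)+1) * (R.card.choose (m+1) : ℝ)) *
                      (Real.exp (lam * ((m:ℝ)+1) * (T / rr) + lam ^ 2 / 8) *
                        Real.exp ((m:ℝ) * lam ^ 2 / 8)) := by rw [e1, hchoose]
                  _ = ((m:ℝ)+1) * ((R.card.choose (m+1) : ℝ) *
                      (Real.exp (lam * ((m:ℝ)+1) * (T / rr) + lam ^ 2 / 8) *
                        Real.exp ((m:ℝ) * lam ^ 2 / 8))) := by ring
        have hfinal := le_of_mul_le_mul_left main (by positivity : (0:ℝ) < (m:ℝ)+1)
        calc ∑ s ∈ R.powersetCard (m+1), Real.exp (lam * ∑ t ∈ s, f t)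
            ≤ (R.card.choose (m+1) : ℝ) *
              Real.exp (lam * (m+1) * (T / rr) + (m+1) * lam ^ 2 / 8) := hfinal
          _ = (R.card.choose (m+1) : ℝ) *
              Real.exp (lam * ((m:ℕ)+1 : ℕ) * (T / rr) + ((m:ℕ)+1 : ℕ) * lam ^ 2 / 8) := by
              push_cast
              ring_nf
        

lemma tail_upper_s5 (M n : ℕ) (hn1 : 1 ≤ n) (hnM : n ≤ M) (f : Fin M → ℝ)
    (hf : ∀ t, f t ∈ Set.Icc (0:ℝ) 1) (ε : ℝ) (hε : 0 < ε) :
    ((((univ : Finset (Fin M)).powersetCard n).filter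
      (fun s => (n:ℝ) * ((∑ t, f t) / M + ε) ≤ ∑ t ∈ s, f t)).card : ℝ)
      ≤ (M.choose n : ℝ) * Real.exp (-(2 * n * ε ^ 2)) := by
  classical
  set lam : ℝ := 4 * ε with hlam
  have hlam0 : 0 ≤ lam := by positivity
  set T := ∑ t, f t with hT
  have hMcast : ((univ : Finset (Fin M)).card : ℝ) = (M:ℝ) := by
    simp [Finset.card_univ]
  have hmgf := mgf_powersetCard f hf lam hlam0 n (univ : Finset (Fin M))
    (by simpa [Finset.card_univ] using hnM)
  rw [show (univ : Finset (Fin M)).card = M by simp] at hmgf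
  set B := (((univ : Finset (Fin M)).powersetCard n).filter
      (fun s => (n:ℝ) * (T / M + ε) ≤ ∑ t ∈ s, f t)) with hB
  have hstep : (B.card : ℝ) * Real.exp (lam * ((n:ℝ) * (T / M + ε)))
      ≤ (M.choose n : ℝ) * Real.exp (lam * n * (T / M) + n * lam ^ 2 / 8) := by
    calc (B.card : ℝ) * Real.exp (lam * ((n:ℝ) * (T / M + ε)))
        = ∑ _s ∈ B, Real.exp (lam * ((n:ℝ) * (T / M + ε))) := by
          rw [Finset.sum_const]; ring
      _ ≤ ∑ s ∈ B, Real.exp (lam * ∑ t ∈ s, f t) := by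
          apply Finset.sum_le_sum
          intro s hs
          rw [hB, Finset.mem_filter] at hs
          exact Real.exp_le_exp.2 (mul_le_mul_of_nonneg_left hs.2 hlam0)
      _ ≤ ∑ s ∈ (univ : Finset (Fin M)).powersetCard n, Real.exp (lam * ∑ t ∈ s, f t) := by
          apply Finset.sum_le_sum_of_subset_of_nonneg (Finset.filter_subset _ _)
          intro s _ _
          exact Real.exp_nonneg _
      _ ≤ (M.choose n : ℝ) * Real.exp (lam * n * (T / M) + n * lam ^ 2 / 8) := hmgf
  have hepos : (0:ℝ) < Real.exp (lam * ((n:ℝ) * (T / M + ε))) := Real.exp_pos _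
  have := (le_div_iff₀ hepos).2 hstep
  calc (B.card : ℝ)
      ≤ (M.choose n : ℝ) * Real.exp (lam * n * (T / M) + n * lam ^ 2 / 8) /
        Real.exp (lam * ((n:ℝ) * (T / M + ε))) := this
    _ = (M.choose n : ℝ) * Real.exp ((lam * n * (T / M) + n * lam ^ 2 / 8) -
        lam * ((n:ℝ) * (T / M + ε))) := by
        rw [Real.exp_sub]; ring
    _ = (M.choose n : ℝ) * Real.exp (-(2 * n * ε ^ 2)) := by
        congr 1
        rw [hlam]
        ring

lemma tail_lower (M n : ℕ) (hn1 : 1 ≤ n) (hnM : n ≤ M) (f : Fin M → ℝ)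
    (hf : ∀ t, f t ∈ Set.Icc (0:ℝ) 1) (ε : ℝ) (hε : 0 < ε) :
    ((((univ : Finset (Fin M)).powersetCard n).filter
      (fun s => ∑ t ∈ s, f t ≤ (n:ℝ) * ((∑ t, f t) / M - ε))).card : ℝ)
      ≤ (M.choose n : ℝ) * Real.exp (-(2 * n * ε ^ 2)) := by
  classical
  set g : Fin M → ℝ := fun t => 1 - f t with hg
  have hgIcc : ∀ t, g t ∈ Set.Icc (0:ℝ) 1 := by
    intro t
    have := hf t
    simp only [Set.mem_Icc] at this ⊢
    constructor
    · simp only [hg]; linarith [this.2]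
    · simp only [hg]; linarith [this.1]
  have hM1 : 1 ≤ M := le_trans hn1 hnM
  have hM0 : (M:ℝ) ≠ 0 := by positivity
  have hsumg : ∑ t, g t = (M:ℝ) - ∑ t, f t := by
    simp only [hg]
    rw [Finset.sum_sub_distrib]
    simp [Finset.card_univ]
  have hset : (((univ : Finset (Fin M)).powersetCard n).filter
      (fun s => ∑ t ∈ s, f t ≤ (n:ℝ) * ((∑ t, f t) / M - ε)))
      = (((univ : Finset (Fin M)).powersetCard n).filter
      (fun s => (n:ℝ) * ((∑ t, g t) / M + ε) ≤ ∑ t ∈ s, g t)) := by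
    apply Finset.filter_congr
    intro s hs
    rw [Finset.mem_powersetCard] at hs
    have hsg : ∑ t ∈ s, g t = (n:ℝ) - ∑ t ∈ s, f t := by
      simp only [hg]
      rw [Finset.sum_sub_distrib]
      simp [hs.2]
    rw [hsg, hsumg]
    have hkey : (n:ℝ) * ((((M:ℝ) - ∑ t, f t)) / M + ε)
        = (n:ℝ) - (n:ℝ) * ((∑ t, f t) / M - ε) := by
      field_simp
      ring
    rw [hkey]
    constructor <;> intro h <;> [linarith; linarith]
  rw [hset]
  exact tail_upper_s5 M n hn1 hnM g hgIcc ε hε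

lemma coord_count {K : ℕ} {α : Type*} [Fintype α] (a : Fin K) (q : α → Prop)
    [DecidablePred q] :
    ((univ : Finset (Fin K → α)).filter (fun Zf => q (Zf a))).card
      = ((univ : Finset α).filter q).card * (Fintype.card α) ^ (K - 1) := by
  classical
  have hcardne : Fintype.card {b : Fin K // b ≠ a} = K - 1 := by
    simp [Fintype.card_subtype_compl]
  have e : {Zf : Fin K → α // q (Zf a)} ≃ {s : α // q s} × ({b : Fin K // b ≠ a} → α) :=
    { toFun := fun Zf => (⟨Zf.1 a, Zf.2⟩, fun b => Zf.1 b.1)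
      invFun := fun p => ⟨fun b => if h : b = a then p.1.1 else p.2 ⟨b, h⟩, by simp [p.1.2]⟩
      left_inv := fun Zf => by
        apply Subtype.ext
        funext b
        by_cases h : b = a
        · subst h; simp
        · simp [h]
      right_inv := fun p => by
        apply Prod.ext
        · apply Subtype.ext; simp
        · funext b
          simp [b.2] }
  calc ((univ : Finset (Fin K → α)).filter (fun Zf => q (Zf a))).card
      = Fintype.card {Zf : Fin K → α // q (Zf a)} := (Fintype.card_subtype _).symm
    _ = Fintype.card ({s : α // q s} × ({b : Fin K // b ≠ a} → α)) := Fintype.card_congr e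
    _ = Fintype.card {s : α // q s} * Fintype.card ({b : Fin K // b ≠ a} → α) :=
        Fintype.card_prod _ _
    _ = Fintype.card {s : α // q s} * Fintype.card α ^ Fintype.card {b : Fin K // b ≠ a} := by
        rw [Fintype.card_fun]
    _ = ((univ : Finset α).filter q).card * Fintype.card α ^ (K - 1) := by
        rw [Fintype.card_subtype, hcardne]

lemma sub_card (M n : ℕ) :
    Fintype.card {s : Finset (Fin M) // s.card = n} = M.choose n := by
  classical
  rw [Fintype.card_subtype]
  have : (univ : Finset (Finset (Fin M))).filter (fun s => s.card = n)
      = (univ : Finset (Fin M)).powersetCard n := by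
    rw [Finset.powersetCard_eq_filter, Finset.powerset_univ]
  rw [this, Finset.card_powersetCard, Finset.card_univ, Fintype.card_fin]

lemma subtype_filter_card (M n : ℕ) (q : Finset (Fin M) → Prop)
    [DecidablePred q] :
    ((univ : Finset {s : Finset (Fin M) // s.card = n}).filter (fun s => q s.1)).card
      = (((univ : Finset (Fin M)).powersetCard n).filter q).card := by
  classical
  apply Finset.card_bij (fun s _ => s.1)
  · rintro ⟨s, hs⟩ h
    rw [Finset.mem_filter] at h ⊢
    exact ⟨Finset.mem_powersetCard.2 ⟨Finset.subset_univ _, hs⟩, h.2⟩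
  · rintro ⟨s, hs⟩ _ ⟨t, ht⟩ _ h
    exact Subtype.ext h
  · intro t ht
    rw [Finset.mem_filter] at ht
    have hc := (Finset.mem_powersetCard.1 ht.1).2
    exact ⟨⟨t, hc⟩, Finset.mem_filter.2 ⟨Finset.mem_univ _, ht.2⟩, rfl⟩

def goodP (M n : ℕ) (Δ : ℝ) (f : Fin M → ℝ) (s : Finset (Fin M)) : Prop :=
  (n:ℝ) * ((∑ t, f t) / M - 2*Δ) < ∑ t ∈ s, f t ∧
    ∑ t ∈ s, f t < (n:ℝ) * ((∑ t, f t) / M + 2*Δ)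


lemma bad_count (M n : ℕ) (hn1 : 1 ≤ n) (hnM : n ≤ M) (f : Fin M → ℝ)
    (hf : ∀ t, f t ∈ Set.Icc (0:ℝ) 1) (Δ : ℝ) (hΔ : 0 < Δ) :
    ((((univ : Finset (Fin M)).powersetCard n).filter
        (fun s => ¬ goodP M n Δ f s)).card : ℝ)
      ≤ 2 * (M.choose n : ℝ) * Real.exp (-(2 * n * (2*Δ) ^ 2)) := by
  classical
  have hsubset : (((univ : Finset (Fin M)).powersetCard n).filter
        (fun s => ¬ goodP M n Δ f s))
      ⊆ (((univ : Finset (Fin M)).powersetCard n).filter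
          (fun s => ∑ t ∈ s, f t ≤ (n:ℝ) * ((∑ t, f t) / M - 2*Δ)))
        ∪ (((univ : Finset (Fin M)).powersetCard n).filter
          (fun s => (n:ℝ) * ((∑ t, f t) / M + 2*Δ) ≤ ∑ t ∈ s, f t)) := by
    intro s hs
    rw [Finset.mem_filter] at hs
    rw [Finset.mem_union, Finset.mem_filter, Finset.mem_filter]
    rcases not_and_or.1 hs.2 with h | h
    · exact Or.inl ⟨hs.1, not_lt.1 h⟩
    · exact Or.inr ⟨hs.1, not_lt.1 h⟩
  calc ((((univ : Finset (Fin M)).powersetCard n).filter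
        (fun s => ¬ goodP M n Δ f s)).card : ℝ)
      ≤ (((((univ : Finset (Fin M)).powersetCard n).filter
          (fun s => ∑ t ∈ s, f t ≤ (n:ℝ) * ((∑ t, f t) / M - 2*Δ)))
        ∪ (((univ : Finset (Fin M)).powersetCard n).filter
          (fun s => (n:ℝ) * ((∑ t, f t) / M + 2*Δ) ≤ ∑ t ∈ s, f t))).card : ℝ) := by
        exact_mod_cast Finset.card_le_card hsubset
    _ ≤ ((((univ : Finset (Fin M)).powersetCard n).filter
          (fun s => ∑ t ∈ s, f t ≤ (n:ℝ) * ((∑ t, f t) / M - 2*Δ))).card : ℝ)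
        + ((((univ : Finset (Fin M)).powersetCard n).filter
          (fun s => (n:ℝ) * ((∑ t, f t) / M + 2*Δ) ≤ ∑ t ∈ s, f t)).card : ℝ) := by
        exact_mod_cast Finset.card_union_le _ _
    _ ≤ (M.choose n : ℝ) * Real.exp (-(2 * n * (2*Δ) ^ 2))
        + (M.choose n : ℝ) * Real.exp (-(2 * n * (2*Δ) ^ 2)) := by
        exact add_le_add (tail_lower M n hn1 hnM f hf (2*Δ) (by linarith))
          (tail_upper_s5 M n hn1 hnM f hf (2*Δ) (by linarith))
    _ = 2 * (M.choose n : ℝ) * Real.exp (-(2 * n * (2*Δ) ^ 2)) := by ring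

/-- **Correctness of trend detection in the adversarial regime with gap.** The losses
`ℓ a t ∈ [0,1]` are fixed, action `astar` beats every other action by more than `4Δ` on
average over the `M` rounds, and each action `a` is monitored on an independent uniformly
random size-`n` subset of the rounds. Mutually independent uniform size-`n` subsets
`Z_1, …, Z_K` are modeled by a uniformly random tuple
`Zf : Fin K → {s : Finset (Fin M) // s.card = n}`; the probability of an event is the fraction
of tuples realizing it. If `n ≥ (1/(8Δ²))·ln(2K/δ)`, then with probability at least `1 - δ`
the action `astar` has the strictly smallest empirical mean loss. -/
theorem trend_detection_ARG
    (Δ δ : ℝ) (hΔ : 0 < Δ) (hδ : δ ∈ Set.Ioo (0 : ℝ) 1)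
    (K : ℕ) (hK : 2 ≤ K)
    (M n : ℕ) (hn1 : 1 ≤ n) (hnM : n ≤ M)
    (hn : (1 / (8 * Δ ^ 2)) * Real.log (2 * K / δ) ≤ (n : ℝ))
    (ℓ : Fin K → Fin M → ℝ) (hℓ : ∀ a t, ℓ a t ∈ Set.Icc (0 : ℝ) 1)
    (astar : Fin K)
    (hgap : ∀ a : Fin K, a ≠ astar →
      (1 / M : ℝ) * ∑ t, (ℓ a t - ℓ astar t) > 4 * Δ) :
    1 - δ ≤
      ((Finset.univ.filter
          (fun Zf : Fin K → {s : Finset (Fin M) // s.card = n} =>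
            ∀ a : Fin K, a ≠ astar →
              (1 / n : ℝ) * ∑ t ∈ (Zf astar).1, ℓ astar t
                < (1 / n : ℝ) * ∑ t ∈ (Zf a).1, ℓ a t)).card : ℝ)
        / (Fintype.card (Fin K → {s : Finset (Fin M) // s.card = n}) : ℝ) := by
  obtain ⟨hδ0, hδ1⟩ := hδ
  have hM1 : 1 ≤ M := le_trans hn1 hnM
  have hnpos : (0:ℝ) < n := by exact_mod_cast hn1
  have hKpos : (0:ℝ) < K := by
    have : (0:ℕ) < K := by omega
    exact_mod_cast this
  have hNchoose : Fintype.card {s : Finset (Fin M) // s.card = n} = M.choose n :=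
    sub_card M n
  have hNpos : 0 < Fintype.card {s : Finset (Fin M) // s.card = n} := by
    rw [hNchoose]; exact Nat.choose_pos hnM
  have hexpbound : Real.exp (-(2 * n * (2*Δ) ^ 2)) ≤ δ / (2*K) := by
    have hx : (0:ℝ) < 2*K/δ := by positivity
    have h8 : (0:ℝ) < 8*Δ^2 := by positivity
    have hlog : Real.log (2*K/δ) ≤ 8 * Δ^2 * n := by
      calc Real.log (2*K/δ) = (8*Δ^2) * ((1/(8*Δ^2)) * Real.log (2*K/δ)) := by
            field_simp
        _ ≤ (8*Δ^2) * n := mul_le_mul_of_nonneg_left hn h8.le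
        _ = 8 * Δ^2 * n := by ring
    calc Real.exp (-(2 * n * (2*Δ) ^ 2)) = Real.exp (-(8 * Δ^2 * n)) := by ring_nf
      _ ≤ Real.exp (-(Real.log (2*K/δ))) := Real.exp_le_exp.2 (by linarith)
      _ = (2*K/δ)⁻¹ := by rw [Real.exp_neg, Real.exp_log hx]
      _ = δ/(2*K) := by rw [inv_div]
  have hbadR : ∀ a : Fin K,
      ((((univ : Finset (Fin M)).powersetCard n).filter
        (fun s => ¬ goodP M n Δ (ℓ a) s)).card : ℝ)
        ≤ (Fintype.card {s : Finset (Fin M) // s.card = n}) * δ / K := by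
    intro a
    have hb := bad_count M n hn1 hnM (ℓ a) (hℓ a) Δ hΔ
    calc ((((univ : Finset (Fin M)).powersetCard n).filter
        (fun s => ¬ goodP M n Δ (ℓ a) s)).card : ℝ)
        ≤ 2 * (M.choose n : ℝ) * Real.exp (-(2 * n * (2*Δ) ^ 2)) := hb
      _ ≤ 2 * (M.choose n : ℝ) * (δ / (2*K)) := by
          apply mul_le_mul_of_nonneg_left hexpbound (by positivity)
      _ = (M.choose n : ℝ) * δ / K := by field_simp
      _ = (Fintype.card {s : Finset (Fin M) // s.card = n}) * δ / K := by rw [hNchoose]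
  have hcomplN : ((univ : Finset (Fin K → {s : Finset (Fin M) // s.card = n})).filter
      (fun Zf => ¬ ∀ a : Fin K, goodP M n Δ (ℓ a) (Zf a).1)).card
      ≤ ∑ a : Fin K, (((univ : Finset (Fin M)).powersetCard n).filter
          (fun s => ¬ goodP M n Δ (ℓ a) s)).card
          * (Fintype.card {s : Finset (Fin M) // s.card = n}) ^ (K - 1) := by
    have hsub : ((univ : Finset (Fin K → {s : Finset (Fin M) // s.card = n})).filter
        (fun Zf => ¬ ∀ a : Fin K, goodP M n Δ (ℓ a) (Zf a).1))
        ⊆ univ.biUnion (fun a : Fin K => univ.filter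
          (fun Zf : Fin K → {s : Finset (Fin M) // s.card = n} =>
            ¬ goodP M n Δ (ℓ a) (Zf a).1)) := by
      intro Zf hZf
      rw [Finset.mem_filter] at hZf
      have h2 := hZf.2
      push_neg at h2
      obtain ⟨a, ha⟩ := h2
      exact Finset.mem_biUnion.2 ⟨a, Finset.mem_univ _,
        Finset.mem_filter.2 ⟨Finset.mem_univ _, ha⟩⟩
    refine le_trans (Finset.card_le_card hsub) (le_trans Finset.card_biUnion_le ?_)
    apply le_of_eq
    apply Finset.sum_congr rfl
    intro a _
    have h1 := coord_count a
      (fun s : {s : Finset (Fin M) // s.card = n} => ¬ goodP M n Δ (ℓ a) s.1)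
    have h2 := subtype_filter_card M n (fun s => ¬ goodP M n Δ (ℓ a) s)
    exact h1.trans (congrArg
      (· * Fintype.card {s : Finset (Fin M) // s.card = n} ^ (K - 1)) h2)
  have hGsub : ((univ : Finset (Fin K → {s : Finset (Fin M) // s.card = n})).filter
      (fun Zf => ∀ a : Fin K, goodP M n Δ (ℓ a) (Zf a).1))
      ⊆ (univ.filter
          (fun Zf : Fin K → {s : Finset (Fin M) // s.card = n} =>
            ∀ a : Fin K, a ≠ astar →
              (1 / n : ℝ) * ∑ t ∈ (Zf astar).1, ℓ astar t
                < (1 / n : ℝ) * ∑ t ∈ (Zf a).1, ℓ a t)) := by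
    intro Zf hZf
    rw [Finset.mem_filter] at hZf ⊢
    refine ⟨Finset.mem_univ _, ?_⟩
    intro a hne
    have hstar := hZf.2 astar
    have ha := hZf.2 a
    simp only [goodP] at hstar ha
    have hgapa := hgap a hne
    rw [Finset.sum_sub_distrib] at hgapa
    have hMpos : (0:ℝ) < M := by exact_mod_cast hM1
    have hmean : (∑ t, ℓ astar t)/(M:ℝ) + 2*Δ ≤ (∑ t, ℓ a t)/(M:ℝ) - 2*Δ := by
      have h2 : (∑ t, ℓ a t)/(M:ℝ) - (∑ t, ℓ astar t)/(M:ℝ)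
          = ((∑ t, ℓ a t) - ∑ t, ℓ astar t)/(M:ℝ) := (sub_div _ _ _).symm
      have h3 : (1/(M:ℝ)) * ((∑ t, ℓ a t) - ∑ t, ℓ astar t)
          = ((∑ t, ℓ a t) - ∑ t, ℓ astar t)/(M:ℝ) := by ring
      rw [h3] at hgapa
      linarith
    have hmul : (n:ℝ) * ((∑ t, ℓ astar t)/(M:ℝ) + 2*Δ)
        ≤ (n:ℝ) * ((∑ t, ℓ a t)/(M:ℝ) - 2*Δ) :=
      mul_le_mul_of_nonneg_left hmean hnpos.le
    have hlt : ∑ t ∈ (Zf astar).1, ℓ astar t < ∑ t ∈ (Zf a).1, ℓ a t := by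
      linarith [hstar.2, ha.1]
    have h1n : (0:ℝ) < 1/(n:ℝ) := by positivity
    exact mul_lt_mul_of_pos_left hlt h1n
  have hcardfun : Fintype.card (Fin K → {s : Finset (Fin M) // s.card = n})
      = (Fintype.card {s : Finset (Fin M) // s.card = n}) ^ K := by
    rw [Fintype.card_fun, Fintype.card_fin]
  have hsumtotal : (Fintype.card {s : Finset (Fin M) // s.card = n}) ^ K
      ≤ ((univ : Finset (Fin K → {s : Finset (Fin M) // s.card = n})).filter
          (fun Zf => ∀ a : Fin K, goodP M n Δ (ℓ a) (Zf a).1)).card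
        + ((univ : Finset (Fin K → {s : Finset (Fin M) // s.card = n})).filter
          (fun Zf => ¬ ∀ a : Fin K, goodP M n Δ (ℓ a) (Zf a).1)).card := by
    have huniv : (univ : Finset (Fin K → {s : Finset (Fin M) // s.card = n}))
        ⊆ ((univ : Finset (Fin K → {s : Finset (Fin M) // s.card = n})).filter
            (fun Zf => ∀ a : Fin K, goodP M n Δ (ℓ a) (Zf a).1))
          ∪ ((univ : Finset (Fin K → {s : Finset (Fin M) // s.card = n})).filter
            (fun Zf => ¬ ∀ a : Fin K, goodP M n Δ (ℓ a) (Zf a).1)) := by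
      intro Zf _
      rw [Finset.mem_union, Finset.mem_filter, Finset.mem_filter]
      by_cases h : ∀ a : Fin K, goodP M n Δ (ℓ a) (Zf a).1
      · exact Or.inl ⟨Finset.mem_univ _, h⟩
      · exact Or.inr ⟨Finset.mem_univ _, h⟩
    calc (Fintype.card {s : Finset (Fin M) // s.card = n}) ^ K
        = (univ : Finset (Fin K → {s : Finset (Fin M) // s.card = n})).card := by
          rw [Finset.card_univ, hcardfun]
      _ ≤ _ := le_trans (Finset.card_le_card huniv) (Finset.card_union_le _ _)
  -- to the reals
  set NR : ℝ := ((Fintype.card {s : Finset (Fin M) // s.card = n} : ℕ) : ℝ) with hNR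
  have hNRpos : (0:ℝ) < NR := by rw [hNR]; exact_mod_cast hNpos
  have hNRKpos : (0:ℝ) < NR ^ K := by positivity
  rw [hcardfun]
  rw [show (((Fintype.card {s : Finset (Fin M) // s.card = n}) ^ K : ℕ) : ℝ) = NR ^ K by
    rw [hNR]; push_cast; ring]
  rw [le_div_iff₀ hNRKpos]
  have hcomplR : (((univ : Finset (Fin K → {s : Finset (Fin M) // s.card = n})).filter
      (fun Zf => ¬ ∀ a : Fin K, goodP M n Δ (ℓ a) (Zf a).1)).card : ℝ) ≤ δ * NR ^ K := by
    have hK1 : K - 1 + 1 = K := Nat.sub_add_cancel (le_trans one_le_two hK)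
    have hNK : NR * NR ^ (K-1) = NR ^ K := by
      calc NR * NR ^ (K-1) = NR ^ (K-1+1) := (pow_succ' NR (K-1)).symm
        _ = NR ^ K := by rw [hK1]
    calc (((univ : Finset (Fin K → {s : Finset (Fin M) // s.card = n})).filter
        (fun Zf => ¬ ∀ a : Fin K, goodP M n Δ (ℓ a) (Zf a).1)).card : ℝ)
        ≤ ((∑ a : Fin K, (((univ : Finset (Fin M)).powersetCard n).filter
            (fun s => ¬ goodP M n Δ (ℓ a) s)).card
            * (Fintype.card {s : Finset (Fin M) // s.card = n}) ^ (K - 1) : ℕ) : ℝ) := by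
          exact_mod_cast hcomplN
      _ = ∑ a : Fin K, ((((univ : Finset (Fin M)).powersetCard n).filter
            (fun s => ¬ goodP M n Δ (ℓ a) s)).card : ℝ) * NR ^ (K - 1) := by
          rw [hNR]
          push_cast
          ring
      _ ≤ ∑ _a : Fin K, (NR * δ / K) * NR ^ (K - 1) := by
          apply Finset.sum_le_sum
          intro a _
          apply mul_le_mul_of_nonneg_right _ (by positivity)
          rw [hNR]
          exact hbadR a
      _ = (K:ℝ) * ((NR * δ / K) * NR ^ (K - 1)) := by
          rw [Finset.sum_const, Finset.card_univ, Fintype.card_fin]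
          push_cast
          ring
      _ = δ * (NR * NR ^ (K-1)) := by
          field_simp
      _ = δ * NR ^ K := by rw [hNK]
  have hGR : ((1:ℝ) - δ) * NR ^ K
      ≤ (((univ : Finset (Fin K → {s : Finset (Fin M) // s.card = n})).filter
          (fun Zf => ∀ a : Fin K, goodP M n Δ (ℓ a) (Zf a).1)).card : ℝ) := by
    have hsumR : NR ^ K
        ≤ (((univ : Finset (Fin K → {s : Finset (Fin M) // s.card = n})).filter
            (fun Zf => ∀ a : Fin K, goodP M n Δ (ℓ a) (Zf a).1)).card : ℝ)
          + (((univ : Finset (Fin K → {s : Finset (Fin M) // s.card = n})).filter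
            (fun Zf => ¬ ∀ a : Fin K, goodP M n Δ (ℓ a) (Zf a).1)).card : ℝ) := by
      rw [hNR]
      exact_mod_cast hsumtotal
    nlinarith [hNRKpos]
  calc ((1:ℝ) - δ) * NR ^ K
      ≤ (((univ : Finset (Fin K → {s : Finset (Fin M) // s.card = n})).filter
          (fun Zf => ∀ a : Fin K, goodP M n Δ (ℓ a) (Zf a).1)).card : ℝ) := hGR
    _ ≤ _ := by exact_mod_cast Finset.card_le_card hGsub
end

section
/- Let K ≥ 3 and N ≥ 1 and t* ≥ 1 be real numbers, and let T ≥ 4K be a real number. Define η = √(ln K / (T K)), γ = √(K t* ln K / T), and δ = √(K / (T ln K)). Then δ ≤ 1/2 and the following inequality holds: K·T·η + (N − 1 + γ·δ·T/(K t*)) · (ln K)/η + N·(1 + 1/(1 − δ)) · K t* / γ + γ·T + K t* ≤ 8·N·√(t* · T · K · ln K) + K t*. -/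
set_option maxHeartbeats 800000


/-- **Parameter-setting computation in Theorem 1** (regret bound for Exp3.T). With
`η = √(ln K / (TK))`, `γ = √(K t* ln K / T)` and `δ = √(K / (T ln K))`, the failure
probability satisfies `δ ≤ 1/2`, and the sum of the Exp3 regret (with restarts and false
detections), the regret from wasted intervals, and the regret from loss-monitoring plays is
at most `8N√(t* T K ln K) + K t*`. -/
theorem exp3T_parameter_setting
    (K N tstar T : ℝ) (hK : 3 ≤ K) (hN : 1 ≤ N) (htstar : 1 ≤ tstar)
    (hT : 4 * K ≤ T)
    (η γ δ : ℝ)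
    (hη : η = Real.sqrt (Real.log K / (T * K)))
    (hγ : γ = Real.sqrt (K * tstar * Real.log K / T))
    (hδ : δ = Real.sqrt (K / (T * Real.log K))) :
    δ ≤ 1 / 2 ∧
    K * T * η + (N - 1 + γ * δ * T / (K * tstar)) * Real.log K / η
        + N * (1 + 1 / (1 - δ)) * (K * tstar) / γ + γ * T + K * tstar
      ≤ 8 * N * Real.sqrt (tstar * T * K * Real.log K) + K * tstar := by
  set L := Real.log K with hLdef
  have hK0 : (0:ℝ) < K := by linarith
  have hT0 : (0:ℝ) < T := by linarith
  have ht0 : (0:ℝ) < tstar := by linarith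
  have hL1 : (1:ℝ) ≤ L := by
    have he : Real.exp 1 ≤ 3 :=
      le_of_lt (lt_trans Real.exp_one_lt_d9 (by norm_num))
    calc (1:ℝ) = Real.log (Real.exp 1) := (Real.log_exp 1).symm
      _ ≤ Real.log K := Real.log_le_log (Real.exp_pos 1) (le_trans he hK)
  have hL0 : (0:ℝ) < L := by linarith
  -- positivity of parameters
  have hηarg : (0:ℝ) < L / (T * K) := div_pos hL0 (by positivity)
  have hη0 : 0 < η := by rw [hη]; exact Real.sqrt_pos.mpr hηarg
  have hγarg : (0:ℝ) < K * tstar * L / T := div_pos (by positivity) hT0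
  have hγ0 : 0 < γ := by rw [hγ]; exact Real.sqrt_pos.mpr hγarg
  have hδ0 : 0 ≤ δ := by rw [hδ]; exact Real.sqrt_nonneg _
  -- squared values
  have hηsq : η ^ 2 = L / (T * K) := by rw [hη]; exact Real.sq_sqrt hηarg.le
  have hγsq : γ ^ 2 = K * tstar * L / T := by rw [hγ]; exact Real.sq_sqrt hγarg.le
  have hδsq : δ ^ 2 = K / (T * L) := by
    rw [hδ]; exact Real.sq_sqrt (by positivity)
  -- δ ≤ 1/2
  have hδhalf : δ ≤ 1 / 2 := by
    have h1 : δ ^ 2 ≤ (1/2 : ℝ) ^ 2 := by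
      rw [hδsq]
      rw [div_le_iff₀ (by positivity)]
      nlinarith
    nlinarith
  refine ⟨hδhalf, ?_⟩
  set S := Real.sqrt (tstar * T * K * L) with hSdef
  have hSarg : (0:ℝ) ≤ tstar * T * K * L := by positivity
  have hS0 : 0 ≤ S := Real.sqrt_nonneg _
  have hSsq : S ^ 2 = tstar * T * K * L := Real.sq_sqrt hSarg
  -- term 1 : K*T*η ≤ S
  have hT1 : K * T * η ≤ S := by
    rw [hSdef]
    rw [Real.le_sqrt (by positivity) hSarg]
    have : (K * T * η) ^ 2 = K * T * L := by
      rw [mul_pow, hηsq]; field_simp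
    rw [this]; nlinarith
  -- γ * δ * T ≤ K * tstar
  have hgd : γ * δ * T ≤ K * tstar := by
    have h2 : (γ * δ * T) ^ 2 = K ^ 2 * tstar := by
      rw [mul_pow, mul_pow, hγsq, hδsq]; field_simp
    have ha : 0 ≤ γ * δ * T := by positivity
    have hb : 0 < K * tstar := by positivity
    nlinarith [h2, ha, hb, mul_nonneg (mul_nonneg (sq_nonneg K) ht0.le)
      (by linarith : (0:ℝ) ≤ tstar - 1)]
  -- coefficient bound
  have hcoef : N - 1 + γ * δ * T / (K * tstar) ≤ N := by
    have : γ * δ * T / (K * tstar) ≤ 1 := by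
      rw [div_le_one (by positivity)]; exact hgd
    linarith
  have hcoef0 : 0 ≤ N - 1 + γ * δ * T / (K * tstar) := by
    have : 0 ≤ γ * δ * T / (K * tstar) := by positivity
    linarith
  -- L / η ≤ S
  have hLη : L / η ≤ S := by
    rw [hSdef, Real.le_sqrt (by positivity) hSarg]
    have : (L / η) ^ 2 = T * K * L := by
      rw [div_pow, hηsq]; field_simp
    rw [this]; nlinarith
  have hT2 : (N - 1 + γ * δ * T / (K * tstar)) * L / η ≤ N * S := by
    have : (N - 1 + γ * δ * T / (K * tstar)) * L / η
        = (N - 1 + γ * δ * T / (K * tstar)) * (L / η) := by ring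
    rw [this]
    have hLη0 : 0 ≤ L / η := by positivity
    calc (N - 1 + γ * δ * T / (K * tstar)) * (L / η)
        ≤ N * (L / η) := mul_le_mul_of_nonneg_right hcoef hLη0
      _ ≤ N * S := mul_le_mul_of_nonneg_left hLη (by linarith)
  -- K*tstar/γ ≤ S
  have hKtγ : K * tstar / γ ≤ S := by
    rw [hSdef, Real.le_sqrt (by positivity) hSarg]
    have : (K * tstar / γ) ^ 2 = K * tstar * T / L := by
      rw [div_pow, hγsq]; field_simp
    rw [this, div_le_iff₀ hL0]
    have hLL : 1 ≤ L * L := by nlinarith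
    nlinarith [mul_pos (mul_pos hK0 ht0) hT0]
  have hT3 : N * (1 + 1 / (1 - δ)) * (K * tstar) / γ ≤ 3 * N * S := by
    have hδ' : 1 / (1 - δ) ≤ 2 := by
      rw [div_le_iff₀ (by linarith)]; linarith
    have hc : N * (1 + 1 / (1 - δ)) ≤ 3 * N := by
      have h1 : 1 + 1 / (1 - δ) ≤ 3 := by linarith
      nlinarith
    have hc0 : 0 ≤ N * (1 + 1 / (1 - δ)) := by
      have : 0 ≤ 1 / (1 - δ) := div_nonneg zero_le_one (by linarith)
      nlinarith
    have heq : N * (1 + 1 / (1 - δ)) * (K * tstar) / γ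
        = N * (1 + 1 / (1 - δ)) * (K * tstar / γ) := by ring
    rw [heq]
    have h0 : 0 ≤ K * tstar / γ := by positivity
    calc N * (1 + 1 / (1 - δ)) * (K * tstar / γ)
        ≤ 3 * N * (K * tstar / γ) := mul_le_mul_of_nonneg_right hc h0
      _ ≤ 3 * N * S := by
          apply mul_le_mul_of_nonneg_left hKtγ; linarith
  -- γ T ≤ S
  have hT4 : γ * T ≤ S := by
    rw [hSdef, Real.le_sqrt (by positivity) hSarg]
    have : (γ * T) ^ 2 = K * tstar * L * T := by
      rw [mul_pow, hγsq]; field_simp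
    rw [this]; nlinarith
  have hfin : (1:ℝ) * S + N * S + 3 * N * S + S ≤ 8 * N * S := by nlinarith
  linarith
end

section
/- Let m ≥ 1 and K ≥ 3m and N ≥ 1 and t* ≥ 1 be real numbers, and let T ≥ 4mK be a real number. Define η = m·√(ln(K/m) / (T K)), δ = √(m K / T), and γ = (1/m)·√(K t* / T). Then δ ≤ 1/2 and the following inequality holds: η·T·K/2 + (N − 1 + δ·γ·m·T/(K t*)) · m·ln(K/m)/η + N·m·(1 + 1/(1 − δ)) · K t* / (γ m) + γ·T ≤ 8·N·m·√(T · K · t* · ln(K/m)). -/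
set_option maxHeartbeats 1000000


/-- **Parameter-setting computation in Theorem 3** (regret bound for OSMD.T, choosing `m` of
`K` actions per round). With `η = m√(ln(K/m)/(TK))`, `δ = √(mK/T)` and `γ = (1/m)√(K t*/T)`,
the failure probability satisfies `δ ≤ 1/2`, and the sum of the OSMD regret (with restarts and
false detections), the regret from wasted intervals, and the regret from loss-monitoring plays
is at most `8Nm√(T K t* ln(K/m))`. -/
theorem osmdT_parameter_setting
    (m K N tstar T : ℝ) (hm : 1 ≤ m) (hK : 3 * m ≤ K) (hN : 1 ≤ N)
    (htstar : 1 ≤ tstar) (hT : 4 * m * K ≤ T)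
    (η γ δ : ℝ)
    (hη : η = m * Real.sqrt (Real.log (K / m) / (T * K)))
    (hδ : δ = Real.sqrt (m * K / T))
    (hγ : γ = (1 / m) * Real.sqrt (K * tstar / T)) :
    δ ≤ 1 / 2 ∧
    η * T * K / 2 + (N - 1 + δ * γ * m * T / (K * tstar)) * m * Real.log (K / m) / η
        + N * m * (1 + 1 / (1 - δ)) * (K * tstar) / (γ * m) + γ * T
      ≤ 8 * N * m * Real.sqrt (T * K * tstar * Real.log (K / m)) := by
  have hm0 : (0:ℝ) < m := lt_of_lt_of_le one_pos hm
  have hK0 : (0:ℝ) < K := lt_of_lt_of_le (by linarith) hK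
  have hT0 : (0:ℝ) < T := lt_of_lt_of_le (by nlinarith) hT
  have ht0 : (0:ℝ) < tstar := lt_of_lt_of_le one_pos htstar
  set L := Real.log (K / m) with hLdef
  have hKm3 : (3:ℝ) ≤ K / m := (le_div_iff₀ hm0).mpr (by linarith)
  have hL1 : (1:ℝ) ≤ L := by
    have h3 : Real.exp 1 ≤ 3 := le_trans (le_of_lt Real.exp_one_lt_d9) (by norm_num)
    have h1 : (1:ℝ) ≤ Real.log 3 := (Real.le_log_iff_exp_le (by norm_num)).mpr h3
    exact le_trans h1 (Real.log_le_log (by norm_num) hKm3)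
  have hL0 : (0:ℝ) < L := lt_of_lt_of_le one_pos hL1
  set a := Real.sqrt T with hadef
  set b := Real.sqrt K with hbdef
  set c := Real.sqrt tstar with hcdef
  set d := Real.sqrt L with hddef
  set s := Real.sqrt m with hsdef
  have ha : a * a = T := Real.mul_self_sqrt hT0.le
  have hb : b * b = K := Real.mul_self_sqrt hK0.le
  have hc : c * c = tstar := Real.mul_self_sqrt ht0.le
  have hd : d * d = L := Real.mul_self_sqrt hL0.le
  have ha0 : 0 < a := Real.sqrt_pos.mpr hT0
  have hb0 : 0 < b := Real.sqrt_pos.mpr hK0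
  have hc0 : 0 < c := Real.sqrt_pos.mpr ht0
  have hd0 : 0 < d := Real.sqrt_pos.mpr hL0
  have hs0 : 0 < s := Real.sqrt_pos.mpr hm0
  have hc1 : (1:ℝ) ≤ c := by
    have h := Real.sqrt_le_sqrt htstar
    rwa [Real.sqrt_one] at h
  have hd1 : (1:ℝ) ≤ d := by
    have h := Real.sqrt_le_sqrt hL1
    rwa [Real.sqrt_one] at h
  have hsm : s ≤ m := by
    calc s = Real.sqrt m := rfl
      _ ≤ Real.sqrt (m * m) := Real.sqrt_le_sqrt (by nlinarith)
      _ = m := Real.sqrt_mul_self hm0.le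
  -- δ ≤ 1/2
  have hδhalf : δ ≤ 1 / 2 := by
    rw [hδ]
    have h1 : m * K / T ≤ 1 / 4 := by
      rw [div_le_iff₀ hT0]; nlinarith
    calc Real.sqrt (m * K / T) ≤ Real.sqrt (1 / 4) := Real.sqrt_le_sqrt h1
      _ = 1 / 2 := by
          rw [show (1/4:ℝ) = (1/2)^2 by norm_num, Real.sqrt_sq (by norm_num : (0:ℝ) ≤ 1/2)]
  -- expressions in terms of square roots
  have hηe : η = m * (d / (a * b)) := by
    rw [hη, Real.sqrt_div hL0.le, Real.sqrt_mul hT0.le]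
  have hδe : δ = s * b / a := by
    rw [hδ, Real.sqrt_div (by positivity), Real.sqrt_mul hm0.le]
  have hγe : γ = 1 / m * (b * c / a) := by
    rw [hγ, Real.sqrt_div (by positivity), Real.sqrt_mul hK0.le]
  have keyR : Real.sqrt (T * K * tstar * L) = a * b * c * d := by
    rw [Real.sqrt_mul (by positivity), Real.sqrt_mul (by positivity),
      Real.sqrt_mul hT0.le]
  -- key identities for the four terms
  have key1 : η * T * K / 2 = m * (a * b * d) / 2 := by
    rw [hηe, ← ha, ← hb]; field_simp
  have key2 : (N - 1 + δ * γ * m * T / (K * tstar)) * m * L / η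
      = (N - 1 + s / c) * (a * b * d) := by
    rw [hηe, hδe, hγe, ← ha, ← hb, ← hc, ← hd]
    field_simp
  have key3 : N * m * (1 + 1 / (1 - δ)) * (K * tstar) / (γ * m)
      = N * m * (1 + 1 / (1 - δ)) * (a * b * c) := by
    rw [mul_div_assoc]
    congr 1
    rw [hγe, ← hb, ← hc]
    field_simp
  have key4 : γ * T = a * b * c / m := by
    rw [hγe, ← ha]; field_simp
  refine ⟨hδhalf, ?_⟩
  rw [key1, key2, key3, key4, keyR]
  clear_value a b c d s L
  clear hη hδ hγ hηe hδe hγe keyR key1 key2 key3 key4 hadef hbdef hcdef hddef hsdef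
  clear ha hb hc hd hLdef hKm3 hL1 hL0 hK hT htstar hK0 hT0 ht0
  clear K T tstar
  -- bounds
  have hw2 : 1 / (1 - δ) ≤ 2 := by
    rw [div_le_iff₀ (by linarith)]; linarith
  have hw0 : 0 ≤ 1 + 1 / (1 - δ) := by
    have : (0:ℝ) < 1 - δ := by linarith
    positivity
  have hsc : s / c ≤ m := by
    calc s / c ≤ s / 1 := by
          apply div_le_div_of_nonneg_left hs0.le one_pos hc1
      _ = s := by ring
      _ ≤ m := hsm
  have hsc0 : 0 ≤ s / c := by positivity
  have hQ0 : (0:ℝ) ≤ a * b * c * d := by positivity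
  have habd : a * b * d ≤ a * b * c * d := by
    calc a * b * d = a * b * d * 1 := by ring
      _ ≤ a * b * d * c := mul_le_mul_of_nonneg_left hc1 (by positivity)
      _ = a * b * c * d := by ring
  have habc : a * b * c ≤ a * b * c * d := by
    calc a * b * c = a * b * c * 1 := by ring
      _ ≤ a * b * c * d := mul_le_mul_of_nonneg_left hd1 (by positivity)
  have B1 : m * (a * b * d) / 2 ≤ m / 2 * (a * b * c * d) := by
    have h := mul_le_mul_of_nonneg_left habd (by positivity : (0:ℝ) ≤ m / 2)
    linarith
  have B2 : (N - 1 + s / c) * (a * b * d) ≤ (N - 1 + m) * (a * b * c * d) :=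
    mul_le_mul (by linarith) habd (by positivity) (by linarith)
  have B3 : N * m * (1 + 1 / (1 - δ)) * (a * b * c) ≤ 3 * (N * m) * (a * b * c * d) := by
    calc N * m * (1 + 1 / (1 - δ)) * (a * b * c)
        ≤ N * m * 3 * (a * b * c) := by
          apply mul_le_mul_of_nonneg_right _ (by positivity)
          apply mul_le_mul_of_nonneg_left (by linarith) (by positivity)
      _ ≤ N * m * 3 * (a * b * c * d) := by
          exact mul_le_mul_of_nonneg_left habc (by positivity)
      _ = 3 * (N * m) * (a * b * c * d) := by ring
  have B4 : a * b * c / m ≤ a * b * c * d := by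
    calc a * b * c / m ≤ a * b * c / 1 := by
          apply div_le_div_of_nonneg_left (by positivity) one_pos hm
      _ = a * b * c := by ring
      _ ≤ a * b * c * d := habc
  have hcoef : m / 2 + (N - 1 + m) + 3 * (N * m) + 1 ≤ 8 * N * m := by
    have h := mul_nonneg (by linarith : (0:ℝ) ≤ N - 1) (by linarith : (0:ℝ) ≤ m - 1)
    nlinarith [h, hm, hN]
  have hfin : m / 2 * (a * b * c * d) + (N - 1 + m) * (a * b * c * d)
      + 3 * (N * m) * (a * b * c * d) + (a * b * c * d) ≤ 8 * N * m * (a * b * c * d) := by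
    calc m / 2 * (a * b * c * d) + (N - 1 + m) * (a * b * c * d)
          + 3 * (N * m) * (a * b * c * d) + (a * b * c * d)
        = (m / 2 + (N - 1 + m) + 3 * (N * m) + 1) * (a * b * c * d) := by ring
      _ ≤ 8 * N * m * (a * b * c * d) := mul_le_mul_of_nonneg_right hcoef hQ0
  linarith
end
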